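/- arXiv:2010.13405 — 9 statements merged into one kernel-verified Lean document; each statement's English description precedes it below -/
import Mathlib

section
/- Let d ≥ 1 and let f : [0,1]^d → ℝ be a non-constant continuous function, and let a ∈ ℝ satisfy min_{x∈[0,1]^d} f(x) < a < max_{x∈[0,1]^d} f(x). Then there exists κ > 0 such that for every ε > 0 the ε-packing number of the level set {f = a} satisfies N({f = a}, ε) ≥ κ·(1/ε)^{d−1}. -/
/-! Since `f` is continuous and the cube is the closure of its interior, there are closed balls
`B(p, δ) ⊆ {f < a}` and `B(q, δ) ⊆ {f > a}` inside the cube. Fix a coordinate `k` with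
`p k ≠ q k` and translate the segment `[p, q]` by the points `w` of a grid of mesh `s` in the
hyperplane `{w k = 0}` with `‖w‖ ≤ δ`; by the intermediate value theorem each translate meets
`{f = a}`. The projection along `q - p` onto that hyperplane is Lipschitz with constant
`K = 1 + ‖q - p‖ / |q k - p k|` and maps the translate by `w` to `p + w`, so level points on
distinct translates are at distance at least `s / K`. Taking `s = 2 K ε` yields
`(⌊δ / s⌋ + 1) ^ (d - 1)` points of `{f = a}` pairwise more than `ε` apart. -/

noncomputable section

/-- The unit hypercube `[0,1]^d`, as a subset of `Fin d → ℝ` (equipped with the sup-norm). -/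
def unitCube (d : ℕ) : Set (Fin d → ℝ) := Set.Icc 0 1

/-- The `r`-packing number of `E ⊆ [0,1]^d` with respect to the sup-norm: the largest `k`
such that there exist `k` points of `E` that are pairwise more than `r` apart. -/
noncomputable def packingNumber {d : ℕ} (E : Set (Fin d → ℝ)) (r : ℝ) : ℕ :=
  sSup {k : ℕ | ∃ x : Fin k → (Fin d → ℝ), (∀ i, x i ∈ E) ∧
    ∀ i j, i ≠ j → r < dist (x i) (x j)}

open Metric Set

theorem exists_closedBall_subset_inter_preimage {X Y : Type*} [PseudoMetricSpace X]
    [TopologicalSpace Y] {S : Set X} {f : X → Y} {V : Set Y} {x : X}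
    (hx : x ∈ closure (interior S)) (hf : ContinuousWithinAt f S x) (hV : IsOpen V)
    (hfx : f x ∈ V) : ∃ p, ∃ r > 0, closedBall p r ⊆ S ∩ f ⁻¹' V := by
  obtain ⟨U, hUo, hxU, hUS⟩ := mem_nhdsWithin.1 (hf.preimage_mem_nhdsWithin (hV.mem_nhds hfx))
  obtain ⟨p, hpU, hpS⟩ := _root_.mem_closure_iff.1 hx U hUo hxU
  obtain ⟨r, hr, hball⟩ :=
    nhds_basis_closedBall.mem_iff.1 ((hUo.inter isOpen_interior).mem_nhds ⟨hpU, hpS⟩)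
  exact ⟨p, r, hr, fun y hy =>
    ⟨interior_subset (hball hy).2, hUS ⟨(hball hy).1, interior_subset (hball hy).2⟩⟩⟩

theorem convex_unitCube (d : ℕ) : Convex ℝ (unitCube d) := convex_Icc 0 1

theorem closure_interior_unitCube (d : ℕ) : closure (interior (unitCube d)) = unitCube d := by
  rw [(convex_unitCube d).closure_interior_eq_closure_of_nonempty_interior,
    unitCube, isClosed_Icc.closure_eq]
  refine ⟨fun _ => 1 / 2, ?_⟩
  rw [unitCube, ← pi_univ_Icc, interior_pi_set finite_univ]
  norm_num

theorem intermediate_value_segment {E α : Type*} [AddCommGroup E] [Module ℝ E]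
    [TopologicalSpace E] [ContinuousAdd E] [ContinuousSMul ℝ E] [LinearOrder α]
    [TopologicalSpace α] [OrderClosedTopology α] {f : E → α} {x y : E}
    (hf : ContinuousOn f (segment ℝ x y)) : Icc (f x) (f y) ⊆ f '' segment ℝ x y :=
  (convex_segment x y).isPreconnected.intermediate_value (left_mem_segment ℝ x y)
    (right_mem_segment ℝ x y) hf

theorem norm_le_mul_norm_add_smul {ι : Type*} [Fintype ι] {w u : ι → ℝ} {k : ι} (hw : w k = 0)
    (hu : u k ≠ 0) (t : ℝ) : ‖w‖ ≤ (1 + ‖u‖ / |u k|) * ‖w + t • u‖ := by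
  set z := w + t • u
  have ht : |t| ≤ ‖z‖ / |u k| := by
    rw [le_div_iff₀ (abs_pos.2 hu), ← abs_mul]
    have hzk : z k = t * u k := by simp [z, hw]
    simpa [hzk] using norm_le_pi_norm z k
  calc ‖w‖ = ‖z - t • u‖ := by simp [z]
    _ ≤ ‖z‖ + |t| * ‖u‖ := by rw [← Real.norm_eq_abs, ← norm_smul]; exact norm_sub_le _ _
    _ ≤ ‖z‖ + ‖z‖ / |u k| * ‖u‖ := by gcongr
    _ = (1 + ‖u‖ / |u k|) * ‖z‖ := by ring

theorem norm_sub_le_mul_norm_sub_of_mem_segment {ι : Type*} [Fintype ι]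
    {p q w w' z z' : ι → ℝ} {k : ι} (hk : p k ≠ q k) (hw : w k = w' k)
    (hz : z ∈ segment ℝ (p + w) (q + w)) (hz' : z' ∈ segment ℝ (p + w') (q + w')) :
    ‖w - w'‖ ≤ (1 + ‖q - p‖ / |q k - p k|) * ‖z - z'‖ := by
  rw [segment_eq_image'] at hz hz'
  obtain ⟨t, -, rfl⟩ := hz
  obtain ⟨t', -, rfl⟩ := hz'
  have key := norm_le_mul_norm_add_smul (w := w - w') (u := q - p) (by simp [hw])
    (sub_ne_zero.2 hk.symm) (t - t')
  convert key using 3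
  · simp
  · simp only
    module

def gridPoint {ι : Type*} [DecidableEq ι] (k : ι) (s : ℝ) {n : ℕ} (v : {j // j ≠ k} → Fin n) :
    ι → ℝ :=
  fun j => if h : j = k then 0 else s * (v ⟨j, h⟩ : ℕ)

section gridPoint

variable {ι : Type*} [DecidableEq ι] {k : ι} {s : ℝ} {n : ℕ}

@[simp]
theorem gridPoint_self (v : {j // j ≠ k} → Fin n) : gridPoint k s v k = 0 := dif_pos rfl

theorem norm_gridPoint_le [Fintype ι] (hs : 0 ≤ s) (v : {j // j ≠ k} → Fin (n + 1)) :
    ‖gridPoint k s v‖ ≤ s * n := by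
  refine (pi_norm_le_iff_of_nonneg (by positivity)).2 fun j => ?_
  by_cases h : j = k
  · simp [gridPoint, h]; positivity
  · have hv : ((v ⟨j, h⟩ : ℕ) : ℝ) ≤ n := by exact_mod_cast Nat.lt_succ_iff.1 (v ⟨j, h⟩).isLt
    simp only [gridPoint, h, dite_false, Real.norm_eq_abs, abs_mul, abs_of_nonneg hs,
      Nat.abs_cast]
    gcongr

theorem le_norm_gridPoint_sub [Fintype ι] (hs : 0 ≤ s) {v v' : {j // j ≠ k} → Fin n}
    (h : v ≠ v') : s ≤ ‖gridPoint k s v - gridPoint k s v'‖ := by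
  obtain ⟨⟨j, hj⟩, hvj⟩ := Function.ne_iff.1 h
  have hsep : (1 : ℝ) ≤ |((v ⟨j, hj⟩ : ℕ) : ℝ) - (v' ⟨j, hj⟩ : ℕ)| := by
    have := Int.one_le_abs (sub_ne_zero.2 (Int.ofNat_inj.not.2 (Fin.val_ne_of_ne hvj)))
    exact_mod_cast this
  calc s = s * 1 := (mul_one s).symm
    _ ≤ s * |((v ⟨j, hj⟩ : ℕ) : ℝ) - (v' ⟨j, hj⟩ : ℕ)| := by gcongr
    _ = ‖(gridPoint k s v - gridPoint k s v') j‖ := by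
      simp [gridPoint, hj, Real.norm_eq_abs, ← mul_sub, abs_of_nonneg hs]
    _ ≤ _ := norm_le_pi_norm _ j

end gridPoint

theorem card_le_packingNumber {d : ℕ} {E : Set (Fin d → ℝ)} (hE : TotallyBounded E) {r : ℝ}
    (hr : 0 < r) {ι : Type*} [Fintype ι] {x : ι → Fin d → ℝ} (hxE : ∀ i, x i ∈ E)
    (hx : Pairwise fun i j => r < dist (x i) (x j)) : Fintype.card ι ≤ packingNumber E r := by
  refine le_csSup ?_ ⟨x ∘ (Fintype.equivFin ι).symm, fun i => hxE _,
    fun i j hij => hx ((Fintype.equivFin ι).symm.injective.ne hij)⟩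
  obtain ⟨t, ht, hcover⟩ := Metric.totallyBounded_iff.1 hE (r / 2) (half_pos hr)
  refine ⟨ht.toFinset.card, ?_⟩
  rintro k ⟨y, hyE, hy⟩
  choose c hct hyc using fun i => mem_iUnion₂.1 (hcover (hyE i))
  calc k = (Finset.univ : Finset (Fin k)).card := (Finset.card_fin k).symm
    _ ≤ ht.toFinset.card := by
      refine Finset.card_le_card_of_injOn c (fun i _ => ht.mem_toFinset.2 (hct i)) ?_
      intro i _ j _ hcij
      by_contra hij
      have := dist_triangle_right (y i) (y j) (c i)
      rw [hcij] at this
      linarith [hy i j hij, hcij ▸ mem_ball.1 (hyc i), mem_ball.1 (hyc j)]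

theorem pow_le_packingNumber_levelSet {d : ℕ} {f : (Fin d → ℝ) → ℝ} {a : ℝ}
    (hf : ContinuousOn f (unitCube d)) {p q : Fin d → ℝ} {δ : ℝ}
    (hp : closedBall p δ ⊆ unitCube d ∩ f ⁻¹' Iio a)
    (hq : closedBall q δ ⊆ unitCube d ∩ f ⁻¹' Ioi a) {k : Fin d} (hk : p k ≠ q k)
    {ε : ℝ} (hε : 0 < ε) {n : ℕ} (hn : 2 * (1 + ‖q - p‖ / |q k - p k|) * ε * n ≤ δ) :
    ((n + 1 : ℕ) : ℝ) ^ (d - 1) ≤ packingNumber {x ∈ unitCube d | f x = a} ε := by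
  set K := 1 + ‖q - p‖ / |q k - p k|
  have hK : 0 < K := by positivity
  have hs : 0 ≤ 2 * K * ε := by positivity
  have hlevel (v : {j // j ≠ k} → Fin (n + 1)) :
      ∃ z ∈ {x ∈ unitCube d | f x = a},
        z ∈ segment ℝ (p + gridPoint k (2 * K * ε) v) (q + gridPoint k (2 * K * ε) v) := by
    have hv : ‖gridPoint k (2 * K * ε) v‖ ≤ δ := (norm_gridPoint_le hs v).trans hn
    obtain ⟨hpv, hpva⟩ := hp (by rwa [mem_closedBall, dist_eq_norm, add_sub_cancel_left])
    obtain ⟨hqv, hqva⟩ := hq (by rwa [mem_closedBall, dist_eq_norm, add_sub_cancel_left])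
    have hseg := (convex_unitCube d).segment_subset hpv hqv
    obtain ⟨z, hz, hza⟩ := intermediate_value_segment (hf.mono hseg) ⟨hpva.le, hqva.le⟩
    exact ⟨z, ⟨hseg hz, hza⟩, hz⟩
  choose z hza hz using hlevel
  have hsep : Pairwise fun v v' => ε < dist (z v) (z v') := by
    intro v v' hvv'
    have hgrid := (le_norm_gridPoint_sub hs hvv').trans
      (norm_sub_le_mul_norm_sub_of_mem_segment hk (by simp) (hz v) (hz v'))
    rw [dist_eq_norm]
    nlinarith
  have hcard := card_le_packingNumber (isCompact_Icc.totallyBounded.subset fun x hx => hx.1)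
    hε hza hsep
  simp only [ne_eq, Fintype.card_pi, Fintype.card_fin, Finset.prod_const, Finset.card_univ,
    Fintype.card_subtype_compl, Fintype.card_unique] at hcard
  exact_mod_cast hcard

theorem stmt0_general (d : ℕ) (f : (Fin d → ℝ) → ℝ) (a : ℝ)
    (hcont : ContinuousOn f (unitCube d))
    (hlow : ∃ x ∈ unitCube d, f x < a)
    (hhigh : ∃ x ∈ unitCube d, a < f x) :
    ∃ κ : ℝ, 0 < κ ∧ ∀ ε : ℝ, 0 < ε →
      κ * (1 / ε) ^ (d - 1) ≤ (packingNumber {x ∈ unitCube d | f x = a} ε : ℝ) := by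
  obtain ⟨x, hx, hfx⟩ := hlow
  obtain ⟨y, hy, hfy⟩ := hhigh
  obtain ⟨p, δ₁, hδ₁, hp⟩ := exists_closedBall_subset_inter_preimage
    ((closure_interior_unitCube d).ge hx) (hcont x hx) isOpen_Iio hfx
  obtain ⟨q, δ₂, hδ₂, hq⟩ := exists_closedBall_subset_inter_preimage
    ((closure_interior_unitCube d).ge hy) (hcont y hy) isOpen_Ioi hfy
  obtain ⟨k, hk⟩ : ∃ k, p k ≠ q k := by
    refine Function.ne_iff.1 fun hpq => ?_
    have hfp := (hp (mem_closedBall_self hδ₁.le)).2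
    have hfq := (hq (mem_closedBall_self hδ₂.le)).2
    simp only [mem_preimage, mem_Iio, mem_Ioi, hpq] at hfp hfq
    exact lt_asymm hfp hfq
  set δ := min δ₁ δ₂
  set K := 1 + ‖q - p‖ / |q k - p k|
  refine ⟨(δ / (2 * K)) ^ (d - 1), by positivity, fun ε hε => ?_⟩
  have hfloor := Nat.floor_le (by positivity : 0 ≤ δ / (2 * K * ε))
  calc (δ / (2 * K)) ^ (d - 1) * (1 / ε) ^ (d - 1) = (δ / (2 * K * ε)) ^ (d - 1) := by
        rw [← mul_pow]; field_simp
    _ ≤ ((⌊δ / (2 * K * ε)⌋₊ + 1 : ℕ) : ℝ) ^ (d - 1) := by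
        gcongr; push_cast; exact (Nat.lt_floor_add_one _).le
    _ ≤ _ := pow_le_packingNumber_levelSet hcont
        ((closedBall_subset_closedBall (min_le_left _ _)).trans hp)
        ((closedBall_subset_closedBall (min_le_right _ _)).trans hq) hk hε
        ((le_div_iff₀' (by positivity)).1 hfloor)

/-- If `f` is a non-constant continuous function on `[0,1]^d` and
`min f < a < max f`, then there is `κ > 0` such that for all `ε > 0` the `ε`-packing number
of the level set `{f = a}` is at least `κ (1/ε)^(d-1)`. -/
theorem stmt0 (d : ℕ) (hd : 1 ≤ d) (f : (Fin d → ℝ) → ℝ) (a : ℝ)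
    (hcont : ContinuousOn f (unitCube d))
    (hnonconst : ∃ x ∈ unitCube d, ∃ y ∈ unitCube d, f x ≠ f y)
    (hlow : ∃ x ∈ unitCube d, f x < a)
    (hhigh : ∃ x ∈ unitCube d, a < f x) :
    ∃ κ : ℝ, 0 < κ ∧ ∀ ε : ℝ, 0 < ε →
      κ * (1 / ε) ^ (d - 1) ≤ (packingNumber {x ∈ unitCube d | f x = a} ε : ℝ) :=
  stmt0_general d f a hcont hlow hhigh
end
end

section
/- In the BA recursion setting, assume additionally that {x ∈ [0,1]^d : f(x) = a} is nonempty. Then for every i ≥ 0 and every δ ∈ (0,1), the number of hypercubes in C_i satisfies |C_i| ≤ 2^d · N({x ∈ [0,1]^d : |f(x) − a| ≤ 2b·2^{−βi}}, δ·2^{−i}). -/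
noncomputable section

/-- The dyadic hypercube at depth `i` with index `k`: `∏_j [k_j 2^{-i}, (k_j+1) 2^{-i}]`. -/
def dyadicCube (d i : ℕ) (k : Fin d → ℕ) : Set (Fin d → ℝ) :=
  Set.Icc (fun j => (k j : ℝ) / 2 ^ i) (fun j => ((k j : ℝ) + 1) / 2 ^ i)

/-- `C` is a dyadic hypercube at depth `i` (inside `[0,1]^d`). -/
def IsDyadicCube (d i : ℕ) (C : Set (Fin d → ℝ)) : Prop :=
  ∃ k : Fin d → ℕ, (∀ j, k j < 2 ^ i) ∧ C = dyadicCube d i k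

lemma packing_bddAbove {d : ℕ} (E : Set (Fin d → ℝ)) (hE : E ⊆ Set.Icc 0 1)
    {r : ℝ} (hr : 0 < r) :
    BddAbove {k : ℕ | ∃ x : Fin k → (Fin d → ℝ), (∀ i, x i ∈ E) ∧
      ∀ i j, i ≠ j → r < dist (x i) (x j)} := by
  classical
  refine ⟨(⌊1/r⌋₊ + 1) ^ d, ?_⟩
  rintro k ⟨x, hxE, hxd⟩
  set M := ⌊1/r⌋₊ + 1 with hM
  have hφb : ∀ m : Fin k, ∀ j, ⌊x m j / r⌋₊ < M := by
    intro m j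
    have h1 : x m j ≤ 1 := (hE (hxE m)).2 j
    have h2 : x m j / r ≤ 1 / r := by gcongr
    calc ⌊x m j / r⌋₊ ≤ ⌊1/r⌋₊ := Nat.floor_le_floor h2
      _ < M := Nat.lt_succ_self _
  set φ : Fin k → (Fin d → Fin M) := fun m j => ⟨⌊x m j / r⌋₊, hφb m j⟩ with hφ
  have hinj : Function.Injective φ := by
    intro m m' h
    by_contra hne
    have hlt := hxd m m' hne
    have hd2 : dist (x m) (x m') < r := by
      rw [dist_pi_lt_iff hr]
      intro j
      have hj : ⌊x m j / r⌋₊ = ⌊x m' j / r⌋₊ := congrArg Fin.val (congrFun h j)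
      have hu0 : 0 ≤ x m j := (hE (hxE m)).1 j
      have hv0 : 0 ≤ x m' j := (hE (hxE m')).1 j
      set t := ⌊x m j / r⌋₊ with ht
      have h1 : (t : ℝ) ≤ x m j / r := Nat.floor_le (by positivity)
      have h3 : (t : ℝ) ≤ x m' j / r := hj ▸ Nat.floor_le (by positivity)
      have h2 : x m j / r < t + 1 := Nat.lt_floor_add_one _
      have h4 : x m' j / r < t + 1 := by
        have := Nat.lt_floor_add_one (x m' j / r)
        rw [← hj] at this; exact_mod_cast this
      have e1 : x m j < (t + 1) * r := (div_lt_iff₀ hr).mp h2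
      have e2 : x m' j < (t + 1) * r := (div_lt_iff₀ hr).mp h4
      have e3 : (t : ℝ) * r ≤ x m j := (le_div_iff₀ hr).mp h1
      have e4 : (t : ℝ) * r ≤ x m' j := (le_div_iff₀ hr).mp h3
      rw [Real.dist_eq, abs_sub_lt_iff]
      constructor <;> nlinarith
    linarith
  have := Fintype.card_le_of_injective φ hinj
  simpa using this

lemma dyadic_subset_unit {d i : ℕ} {k : Fin d → ℕ} (hk : ∀ j, k j < 2 ^ i) :
    dyadicCube d i k ⊆ unitCube d := by
  intro x hx
  refine ⟨fun j => ?_, fun j => ?_⟩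
  · calc (0:ℝ) ≤ (k j : ℝ) / 2 ^ i := by positivity
      _ ≤ x j := hx.1 j
  · calc x j ≤ ((k j : ℝ) + 1) / 2 ^ i := hx.2 j
      _ ≤ 1 := by
        rw [div_le_one (by positivity)]
        exact_mod_cast Nat.succ_le_of_lt (hk j)

/-- In the BA recursion setting with nonempty level set, for every `i ≥ 0`
and every `δ ∈ (0,1)`, `|C_i| ≤ 2^d · N({|f - a| ≤ 2b 2^{-βi}}, δ 2^{-i})`. -/
theorem stmt3 (d : ℕ) (hd : 1 ≤ d) (f : (Fin d → ℝ) → ℝ) (a b β : ℝ)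
    (hb : 0 < b) (hβ : 0 < β)
    (g : Set (Fin d → ℝ) → (Fin d → ℝ) → ℝ)
    (hg0 : ∀ x, g (unitCube d) x = a)
    (hgacc : ∀ i : ℕ, 1 ≤ i → ∀ C : Set (Fin d → ℝ), IsDyadicCube d i C →
      ∀ x ∈ C, |g C x - f x| ≤ b * (2 : ℝ) ^ (-(β * (i : ℝ))))
    (fam : ℕ → Set (Set (Fin d → ℝ)))
    (hfam0 : fam 0 = {unitCube d})
    (hfam : ∀ i : ℕ, 1 ≤ i → fam i =
      {C' | IsDyadicCube d i C' ∧ (∃ C ∈ fam (i - 1), C' ⊆ C) ∧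
        ∃ x ∈ C', |g C' x - a| ≤ b * (2 : ℝ) ^ (-(β * (i : ℝ)))})
    (hne : ∃ x ∈ unitCube d, f x = a) :
    ∀ i : ℕ, ∀ δ ∈ Set.Ioo (0 : ℝ) 1,
      (fam i).ncard ≤ 2 ^ d *
        packingNumber {x ∈ unitCube d | |f x - a| ≤ 2 * b * (2 : ℝ) ^ (-(β * (i : ℝ)))}
          (δ * (2 : ℝ) ^ (-(i : ℝ))) := by
  classical
  intro i δ hδ
  obtain ⟨hδ0, hδ1⟩ := hδ
  have hrpos : (0:ℝ) < δ * (2:ℝ) ^ (-(i:ℝ)) := by positivity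
  set E := {x ∈ unitCube d | |f x - a| ≤ 2 * b * (2:ℝ) ^ (-(β * (i:ℝ)))} with hEdef
  set r := δ * (2:ℝ) ^ (-(i:ℝ)) with hrdef
  have hEsub : E ⊆ Set.Icc 0 1 := fun x hx => hx.1
  have hbdd := packing_bddAbove E hEsub hrpos
  -- the packing number is at least 1
  obtain ⟨x0, hx0u, hfx0⟩ := hne
  have hN1 : 1 ≤ packingNumber E r := by
    refine le_csSup hbdd ⟨fun _ => x0, fun _ => ⟨hx0u, ?_⟩, fun m m' h => absurd (Subsingleton.elim m m') h⟩
    rw [hfx0, sub_self, abs_zero]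
    positivity
  rcases Nat.eq_zero_or_pos i with hi | hi
  · subst hi
    rw [hfam0, Set.ncard_singleton]
    calc 1 = 1 * 1 := (one_mul 1).symm
      _ ≤ 2 ^ d * packingNumber E r := Nat.mul_le_mul (Nat.one_le_two_pow) hN1
  -- main case i ≥ 1
  have hfami := hfam i hi
  set bβ := b * (2:ℝ) ^ (-(β * (i:ℝ))) with hbβ
  have hkeyex : ∀ C ∈ fam i, IsDyadicCube d i C := by
    intro C hC; rw [hfami] at hC; exact hC.1
  have hptex : ∀ C ∈ fam i, ∃ x ∈ C, |g C x - a| ≤ bβ := by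
    intro C hC; rw [hfami] at hC; exact hC.2.2
  set key : Set (Fin d → ℝ) → (Fin d → ℕ) :=
    fun C => if h : IsDyadicCube d i C then h.choose else fun _ => 0 with hkeydef
  set pt : Set (Fin d → ℝ) → (Fin d → ℝ) :=
    fun C => if h : ∃ x ∈ C, |g C x - a| ≤ bβ then h.choose else 0 with hptdef
  have hkeyspec : ∀ C ∈ fam i, (∀ j, key C j < 2 ^ i) ∧ C = dyadicCube d i (key C) := by
    intro C hC
    have h := hkeyex C hC
    simp only [hkeydef, dif_pos h]
    exact ⟨h.choose_spec.1, h.choose_spec.2⟩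
  have hptspec : ∀ C ∈ fam i, pt C ∈ C ∧ |g C (pt C) - a| ≤ bβ := by
    intro C hC
    have h := hptex C hC
    simp only [hptdef, dif_pos h]
    exact ⟨h.choose_spec.1, h.choose_spec.2⟩
  have hptE : ∀ C ∈ fam i, pt C ∈ E := by
    intro C hC
    obtain ⟨hmem, hga⟩ := hptspec C hC
    obtain ⟨hkb, hkeq⟩ := hkeyspec C hC
    have hunit : pt C ∈ unitCube d := dyadic_subset_unit hkb (hkeq ▸ hmem)
    refine ⟨hunit, ?_⟩
    have hgf := hgacc i hi C (hkeyex C hC) (pt C) hmem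
    have hrw : f (pt C) - a = (g C (pt C) - a) - (g C (pt C) - f (pt C)) := by ring
    calc |f (pt C) - a| = |(g C (pt C) - a) - (g C (pt C) - f (pt C))| := by rw [hrw]
      _ ≤ |g C (pt C) - a| + |g C (pt C) - f (pt C)| := abs_sub _ _
      _ ≤ bβ + bβ := add_le_add hga hgf
      _ = 2 * b * (2:ℝ) ^ (-(β * (i:ℝ))) := by rw [hbβ]; ring
  have h2inv : (2:ℝ) ^ (-(i:ℝ)) = ((2:ℝ) ^ (i:ℕ))⁻¹ := by
    rw [Real.rpow_neg (by norm_num), Real.rpow_natCast]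
  have hsep : ∀ C ∈ fam i, ∀ C' ∈ fam i, C ≠ C' →
      (∀ j, key C j % 2 = key C' j % 2) → r < dist (pt C) (pt C') := by
    intro C hC C' hC' hneq hpar
    obtain ⟨hkb, hkeq⟩ := hkeyspec C hC
    obtain ⟨hkb', hkeq'⟩ := hkeyspec C' hC'
    have hkne : key C ≠ key C' := fun h => hneq (by rw [hkeq, hkeq', h])
    obtain ⟨j, hj⟩ := Function.ne_iff.mp hkne
    have h2 : key C j + 2 ≤ key C' j ∨ key C' j + 2 ≤ key C j := by
      have := hpar j; omega
    have hx1 : pt C ∈ dyadicCube d i (key C) := hkeq ▸ (hptspec C hC).1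
    have hx2 : pt C' ∈ dyadicCube d i (key C') := hkeq' ▸ (hptspec C' hC').1
    have hb1u : pt C j ≤ ((key C j : ℝ) + 1) / 2 ^ i := hx1.2 j
    have hb1l : (key C j : ℝ) / 2 ^ i ≤ pt C j := hx1.1 j
    have hb2u : pt C' j ≤ ((key C' j : ℝ) + 1) / 2 ^ i := hx2.2 j
    have hb2l : (key C' j : ℝ) / 2 ^ i ≤ pt C' j := hx2.1 j
    have hgap : ((2:ℝ) ^ (i:ℕ))⁻¹ ≤ |pt C j - pt C' j| := by
      have hp : (0:ℝ) < 2 ^ (i:ℕ) := by positivity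
      rcases h2 with h | h
      · have hd1 : ((key C j:ℝ) + 2) / 2 ^ i ≤ (key C' j:ℝ) / 2 ^ i := by
          gcongr
          exact_mod_cast h
        have hc : ((key C j:ℝ) + 1) / 2 ^ i + ((2:ℝ) ^ (i:ℕ))⁻¹ = ((key C j:ℝ) + 2) / 2 ^ i := by
          field_simp; ring
        rw [le_abs]; right; linarith
      · have hd1 : ((key C' j:ℝ) + 2) / 2 ^ i ≤ (key C j:ℝ) / 2 ^ i := by
          gcongr
          exact_mod_cast h
        have hc : ((key C' j:ℝ) + 1) / 2 ^ i + ((2:ℝ) ^ (i:ℕ))⁻¹ = ((key C' j:ℝ) + 2) / 2 ^ i := by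
          field_simp; ring
        rw [le_abs]; left; linarith
    calc r = δ * (2:ℝ) ^ (-(i:ℝ)) := hrdef
      _ < 1 * (2:ℝ) ^ (-(i:ℝ)) := by
        have : (0:ℝ) < (2:ℝ) ^ (-(i:ℝ)) := by positivity
        exact mul_lt_mul_of_pos_right hδ1 this
      _ = ((2:ℝ) ^ (i:ℕ))⁻¹ := by rw [one_mul, h2inv]
      _ ≤ |pt C j - pt C' j| := hgap
      _ = dist (pt C j) (pt C' j) := (Real.dist_eq _ _).symm
      _ ≤ dist (pt C) (pt C') := dist_le_pi_dist _ _ j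
  -- finiteness
  have hfin : (fam i).Finite := by
    have hsub : fam i ⊆ (fun k : Fin d → ℕ => dyadicCube d i k) '' {k | ∀ j, k j < 2 ^ i} := by
      intro C hC
      exact ⟨key C, (hkeyspec C hC).1, ((hkeyspec C hC).2).symm⟩
    refine Set.Finite.subset (Set.Finite.image _ ?_) hsub
    have hsub2 : {k : Fin d → ℕ | ∀ j, k j < 2 ^ i} ⊆
        Set.pi Set.univ (fun _ => Set.Iio (2 ^ i)) := fun k hk j _ => hk j
    exact (Set.Finite.pi (fun _ => Set.finite_Iio _)).subset hsub2
  set s := hfin.toFinset with hsdef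
  have hcard : (fam i).ncard = s.card := Set.ncard_eq_toFinset_card _ hfin
  set p : Set (Fin d → ℝ) → (Fin d → Fin 2) :=
    fun C j => ⟨key C j % 2, by omega⟩ with hpdef
  have hsum : s.card = ∑ c : Fin d → Fin 2, (s.filter fun C => p C = c).card :=
    Finset.card_eq_sum_card_fiberwise (fun C _ => Finset.mem_univ _)
  have hfiber : ∀ c : Fin d → Fin 2, (s.filter fun C => p C = c).card ≤ packingNumber E r := by
    intro c
    set F := s.filter fun C => p C = c with hFdef
    have hFsub : ∀ C ∈ F, C ∈ fam i := by
      intro C hC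
      exact hfin.mem_toFinset.mp (Finset.mem_filter.mp hC).1
    refine le_csSup hbdd ?_
    refine ⟨fun m => pt ((F.equivFin.symm m : F) : Set (Fin d → ℝ)),
      fun m => hptE _ (hFsub _ (F.equivFin.symm m).2), ?_⟩
    intro m m' hmm
    have hne2 : ((F.equivFin.symm m : F) : Set (Fin d → ℝ)) ≠ (F.equivFin.symm m' : F) := by
      intro h
      exact hmm (F.equivFin.symm.injective (Subtype.ext h))
    have hCm := hFsub _ (F.equivFin.symm m).2
    have hCm' := hFsub _ (F.equivFin.symm m').2
    have hpar : ∀ j, key ((F.equivFin.symm m : F) : Set (Fin d → ℝ)) j % 2 =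
        key ((F.equivFin.symm m' : F) : Set (Fin d → ℝ)) j % 2 := by
      intro j
      have h1 : p ((F.equivFin.symm m : F) : Set (Fin d → ℝ)) = c :=
        (Finset.mem_filter.mp (F.equivFin.symm m).2).2
      have h2 : p ((F.equivFin.symm m' : F) : Set (Fin d → ℝ)) = c :=
        (Finset.mem_filter.mp (F.equivFin.symm m').2).2
      exact congrArg Fin.val (congrFun (h1.trans h2.symm) j)
    exact hsep _ hCm _ hCm' hne2 hpar
  rw [hcard, hsum]
  calc ∑ c : Fin d → Fin 2, (s.filter fun C => p C = c).card
      ≤ ∑ _c : Fin d → Fin 2, packingNumber E r := Finset.sum_le_sum (fun c _ => hfiber c)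
    _ = Fintype.card (Fin d → Fin 2) * packingNumber E r := by
        rw [Finset.sum_const, Finset.card_univ, smul_eq_mul]
    _ = 2 ^ d * packingNumber E r := by simp
end
end

section
/- Let d ≥ 1, a ∈ ℝ, c > 0, γ ∈ (0,1], and set κ₁ := 2·8^d·(2c)^{d/γ}. There exists a deterministic algorithm A such that for every (c,γ)-Hölder function f : [0,1]^d → ℝ with nonempty level set {f = a}, every accuracy ε > 0, and every integer n > κ₁/ε^{d/γ}, the output S_n of A run on f after n queries is an ε-approximation of {f = a}. -/
noncomputable section

/-- A deterministic sequential algorithm. -/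
structure Algorithm (d : ℕ) where
  query : (n : ℕ) → (Fin n → ℝ) → (Fin d → ℝ)
  query_mem : ∀ n h, query n h ∈ unitCube d
  output : (n : ℕ) → (Fin n → ℝ) → Set (Fin d → ℝ)
  output_sub : ∀ n h, output n h ⊆ unitCube d

/-- The `(n+1)`-st query point of algorithm `A` run on `f`. -/
noncomputable def Algorithm.point {d : ℕ} (A : Algorithm d) (f : (Fin d → ℝ) → ℝ) :
    ℕ → (Fin d → ℝ)
  | n => A.query n fun i : Fin n => f (Algorithm.point A f i)
termination_by n => n
decreasing_by exact i.isLt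

/-- The output set of algorithm `A` run on `f` after `n` queries. -/
def Algorithm.outputAfter {d : ℕ} (A : Algorithm d) (f : (Fin d → ℝ) → ℝ) (n : ℕ) :
    Set (Fin d → ℝ) :=
  A.output n fun i : Fin n => f (A.point f i)

def IsEpsApprox (d : ℕ) (f : (Fin d → ℝ) → ℝ) (a ε : ℝ) (S : Set (Fin d → ℝ)) : Prop :=
  {x ∈ unitCube d | f x = a} ⊆ S ∧ S ⊆ {x ∈ unitCube d | |f x - a| ≤ ε}

/-- `f` is `(c,γ)`-Hölder on `E` with respect to the sup-norm. -/
def HolderOn (d : ℕ) (c γ : ℝ) (E : Set (Fin d → ℝ)) (f : (Fin d → ℝ) → ℝ) : Prop :=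
  ∀ x ∈ E, ∀ y ∈ E, |f x - f y| ≤ c * ‖x - y‖ ^ γ

namespace S5

/-- index where level-`j` block starts -/
def gstart (d j : ℕ) : ℕ := ∑ i ∈ Finset.range j, (2 ^ d) ^ i

lemma gstart_succ (d j : ℕ) : gstart d (j + 1) = gstart d j + (2 ^ d) ^ j :=
  Finset.sum_range_succ _ _

lemma self_le_gstart (d j : ℕ) : j ≤ gstart d j := by
  induction j with
  | zero => simp [gstart]
  | succ j ih =>
    rw [gstart_succ]
    have : 1 ≤ (2 ^ d) ^ j := Nat.one_le_pow _ _ (by positivity)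
    omega

lemma gstart_mono (d : ℕ) : Monotone (gstart d) := by
  intro i j hij
  exact Finset.sum_le_sum_of_subset (Finset.range_subset_range.2 hij)

lemma gstart_le_pow (d j : ℕ) (hd : 1 ≤ d) : gstart d j ≤ (2 ^ d) ^ j := by
  induction j with
  | zero => simp [gstart]
  | succ j ih =>
    rw [gstart_succ, pow_succ]
    have h2 : 2 ≤ 2 ^ d := by calc 2 = 2 ^ 1 := rfl
                                   _ ≤ 2 ^ d := Nat.pow_le_pow_right (by norm_num) hd
    nlinarith [Nat.one_le_pow j (2^d) (show 0 < 2^d by positivity)]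

/-- level of index `k` -/
def lvl (d k : ℕ) : ℕ := Nat.findGreatest (fun j => gstart d j ≤ k) k

lemma lvl_spec (d k : ℕ) : gstart d (lvl d k) ≤ k :=
  Nat.findGreatest_spec (P := fun j => gstart d j ≤ k) (m := 0) (Nat.zero_le k)
    (by simp [gstart])

lemma lvl_spec' (d k : ℕ) : k < gstart d (lvl d k + 1) := by
  by_contra h
  push_neg at h
  have hle : lvl d k + 1 ≤ k := le_trans (self_le_gstart d _) h
  exact Nat.findGreatest_is_greatest (Nat.lt_succ_self _) hle h

lemma lvl_eq (d k j : ℕ) (h1 : gstart d j ≤ k) (h2 : k < gstart d (j + 1)) :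
    lvl d k = j := by
  have hjk : j ≤ k := le_trans (self_le_gstart d j) h1
  have hge : j ≤ lvl d k := Nat.le_findGreatest hjk h1
  rcases Nat.lt_or_ge (lvl d k) (j + 1) with h | h
  · omega
  · exfalso
    have := lvl_spec d k
    have : gstart d (j + 1) ≤ gstart d (lvl d k) := gstart_mono d h
    omega

/-- digits of cell index `r` at level `j` -/
def cell (d j r : ℕ) : Fin d → Fin (2 ^ j) :=
  finFunctionFinEquiv.symm ⟨r % (2 ^ j) ^ d, Nat.mod_lt _ (by positivity)⟩

/-- grid point: center of cell `r` at level `j` -/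
def gpt (d j r : ℕ) : Fin d → ℝ := fun i => ((cell d j r i : ℕ) + 1 / 2) / 2 ^ j

/-- the k-th query point -/
def ept (d k : ℕ) : Fin d → ℝ := gpt d (lvl d k) (k - gstart d (lvl d k))

lemma gpt_mem (d j r : ℕ) : gpt d j r ∈ unitCube d := by
  constructor <;> intro i <;> simp only [gpt, Pi.zero_apply, Pi.one_apply]
  · positivity
  · rw [div_le_one (by positivity)]
    have : (cell d j r i : ℕ) + 1 ≤ 2 ^ j := (cell d j r i).isLt
    have h' : ((cell d j r i : ℕ) : ℝ) + 1 ≤ (2 : ℝ) ^ j := by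
      exact_mod_cast this
    linarith

lemma ept_mem (d k : ℕ) : ept d k ∈ unitCube d := gpt_mem _ _ _

lemma mid_bound (t m p : ℝ) (hp : 0 < p) (h1 : m / p ≤ t) (h2 : t ≤ (m + 1) / p) :
    |t - (m + 1 / 2) / p| ≤ 1 / (2 * p) := by
  have h1' : m ≤ t * p := (div_le_iff₀ hp).1 h1
  have h2' : t * p ≤ m + 1 := (le_div_iff₀ hp).1 h2
  have he : t - (m + 1 / 2) / p = (t * p - (m + 1 / 2)) / p := by field_simp
  rw [he, abs_div, abs_of_pos hp]
  rw [div_le_div_iff₀ hp (by positivity)]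
  have : |t * p - (m + 1 / 2)| ≤ 1 / 2 := by
    rw [abs_le]; constructor <;> linarith
  nlinarith [abs_nonneg (t * p - (m + 1 / 2))]

/-- covering lemma -/
lemma cover (d : ℕ) (x : Fin d → ℝ) (hx : x ∈ unitCube d) (j : ℕ) :
    ∃ k : ℕ, k < gstart d (j + 1) ∧ ∀ i, |x i - ept d k i| ≤ 1 / 2 ^ (j + 1) := by
  classical
  set v : Fin d → Fin (2 ^ j) := fun i =>
    ⟨min ⌊x i * 2 ^ j⌋₊ (2 ^ j - 1), by
      have : 0 < 2 ^ j := by positivity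
      omega⟩ with hv
  set r : Fin ((2 ^ j) ^ d) := finFunctionFinEquiv v with hr
  refine ⟨gstart d j + (r : ℕ), ?_, ?_⟩
  · rw [gstart_succ]
    have : (r : ℕ) < (2 ^ j) ^ d := r.isLt
    have hpe : (2 ^ j) ^ d = (2 ^ d) ^ j := by rw [← pow_mul, ← pow_mul, Nat.mul_comm]
    omega
  · have hpe : (2 ^ j) ^ d = (2 ^ d) ^ j := by rw [← pow_mul, ← pow_mul, Nat.mul_comm]
    have hlt : (r : ℕ) < (2 ^ d) ^ j := hpe ▸ r.isLt
    have hlvl : lvl d (gstart d j + (r : ℕ)) = j := by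
      apply lvl_eq
      · omega
      · rw [gstart_succ]; omega
    intro i
    have hept : ept d (gstart d j + (r : ℕ)) i = ((v i : ℕ) + 1 / 2) / 2 ^ j := by
      unfold ept
      rw [hlvl]
      have hsub : gstart d j + (r : ℕ) - gstart d j = (r : ℕ) := by omega
      rw [hsub]
      unfold gpt cell
      have hmod : (r : ℕ) % (2 ^ j) ^ d = (r : ℕ) := Nat.mod_eq_of_lt r.isLt
      have : (⟨(r : ℕ) % (2 ^ j) ^ d, Nat.mod_lt _ (by positivity)⟩ : Fin ((2 ^ j) ^ d)) = r :=
        Fin.ext hmod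
      rw [this, hr, Equiv.symm_apply_apply]
    rw [hept]
    -- now the floor bound
    have hx0 : 0 ≤ x i := hx.1 i
    have hx1 : x i ≤ 1 := hx.2 i
    have hp : (0 : ℝ) < 2 ^ j := by positivity
    have hfl : ((v i : ℕ) : ℝ) / 2 ^ j ≤ x i := by
      rw [div_le_iff₀ hp]
      have h1 : (v i : ℕ) ≤ ⌊x i * 2 ^ j⌋₊ := by simp [hv]
      have h2 : (⌊x i * 2 ^ j⌋₊ : ℝ) ≤ x i * 2 ^ j := Nat.floor_le (by positivity)
      calc ((v i : ℕ) : ℝ) ≤ (⌊x i * 2 ^ j⌋₊ : ℝ) := by exact_mod_cast h1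
        _ ≤ x i * 2 ^ j := h2
    have hfu : x i ≤ (((v i : ℕ) : ℝ) + 1) / 2 ^ j := by
      rw [le_div_iff₀ hp]
      rcases le_or_gt ⌊x i * 2 ^ j⌋₊ (2 ^ j - 1) with h | h
      · have hvi : (v i : ℕ) = ⌊x i * 2 ^ j⌋₊ := by simp [hv, min_eq_left h]
        have := Nat.lt_floor_add_one (x i * 2 ^ j)
        rw [hvi]
        push_cast
        linarith
      · have hvi : (v i : ℕ) = 2 ^ j - 1 := by simp [hv, min_eq_right h.le]
        have h2p : (1:ℕ) ≤ 2 ^ j := Nat.one_le_pow _ _ (by norm_num)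
        have : ((v i : ℕ) : ℝ) + 1 = 2 ^ j := by
          rw [hvi]
          push_cast [h2p]
          ring
        rw [this]
        nlinarith
    have := mid_bound (x i) ((v i : ℕ) : ℝ) (2 ^ j) hp hfl hfu
    have h2 : (2 : ℝ) * 2 ^ j = 2 ^ (j + 1) := by ring
    rw [h2] at this
    exact this


def J (d n : ℕ) : ℕ := Nat.findGreatest (fun j => gstart d (j + 1) ≤ n) n

lemma J_spec (d n : ℕ) (hn : 1 ≤ n) : gstart d (J d n + 1) ≤ n :=
  Nat.findGreatest_spec (P := fun j => gstart d (j + 1) ≤ n) (m := 0) (Nat.zero_le n)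
    (by simpa [gstart] using hn)

lemma J_spec' (d n : ℕ) : n < gstart d (J d n + 2) := by
  by_contra h
  push_neg at h
  have hle : J d n + 1 ≤ n := le_trans (by have := self_le_gstart d (J d n + 2); omega) h
  exact Nat.findGreatest_is_greatest (Nat.lt_succ_self _) hle h

def delta (d n : ℕ) : ℝ := 1 / 2 ^ (J d n + 1)

lemma delta_pos (d n : ℕ) : 0 < delta d n := by unfold delta; positivity

/-- The algorithm. -/
def algo (d : ℕ) (a c γ : ℝ) : Algorithm d where
  query n _ := ept d n
  query_mem n _ := ept_mem d n
  output n h := {x | x ∈ unitCube d ∧ ∃ i : Fin n,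
    |h i - a| ≤ c * (delta d n) ^ γ ∧ ∀ i', |x i' - ept d (i : ℕ) i'| ≤ delta d n}
  output_sub n h := fun x hx => hx.1

lemma point_eq (d : ℕ) (a c γ : ℝ) (f : (Fin d → ℝ) → ℝ) (k : ℕ) :
    (algo d a c γ).point f k = ept d k := by
  rw [Algorithm.point]
  rfl

/-- Key numeric estimate. -/
lemma eps_bound (d : ℕ) (hd : 1 ≤ d) (c γ ε : ℝ) (hc : 0 < c) (hγ0 : 0 < γ)
    (hε : 0 < ε) (n : ℕ)
    (hn : 2 * 8 ^ d * (2 * c) ^ ((d : ℝ) / γ) / ε ^ ((d : ℝ) / γ) < (n : ℝ)) :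
    2 * c * (delta d n) ^ γ ≤ ε := by
  set D : ℝ := (d : ℝ) / γ with hD
  have hDpos : 0 < D := div_pos (by exact_mod_cast hd) hγ0
  set j := J d n with hj
  have hεD : (0 : ℝ) < ε ^ D := Real.rpow_pos_of_pos hε D
  have h2c : (0 : ℝ) < 2 * c := by linarith
  have h2cD : (0 : ℝ) < (2 * c) ^ D := Real.rpow_pos_of_pos h2c D
  have h1 : 2 * 8 ^ d * (2 * c) ^ D < (n : ℝ) * ε ^ D := by
    rw [div_lt_iff₀ hεD] at hn; exact hn
  have hP : (0 : ℝ) < 2 ^ ((j + 1) * d) := by positivity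
  have hub : (n : ℝ) < 2 ^ ((j + 1) * d) * 2 ^ d := by
    have hnat : n < (2 ^ d) ^ (j + 2) := lt_of_lt_of_le (J_spec' d n) (gstart_le_pow d _ hd)
    calc (n : ℝ) < (((2 ^ d) ^ (j + 2) : ℕ) : ℝ) := by exact_mod_cast hnat
      _ = 2 ^ ((j + 1) * d) * 2 ^ d := by
          push_cast
          rw [← pow_mul, ← pow_add]
          congr 1
          ring
  have h8 : (2 : ℝ) ^ d ≤ 2 * 8 ^ d := by
    have : (2 : ℝ) ^ d ≤ 8 ^ d := pow_le_pow_left₀ (by norm_num) (by norm_num) d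
    have h8p : (0 : ℝ) < 8 ^ d := by positivity
    linarith
  -- derive (2c)^D < 2^((j+1)d) * ε^D
  have hkey : (2 * c) ^ D < 2 ^ ((j + 1) * d) * ε ^ D := by
    have step : (2 : ℝ) ^ d * (2 * c) ^ D < 2 ^ ((j + 1) * d) * 2 ^ d * ε ^ D := by
      calc (2 : ℝ) ^ d * (2 * c) ^ D ≤ 2 * 8 ^ d * (2 * c) ^ D := by
            apply mul_le_mul_of_nonneg_right h8 h2cD.le
        _ < (n : ℝ) * ε ^ D := h1
        _ ≤ 2 ^ ((j + 1) * d) * 2 ^ d * ε ^ D := by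
            apply mul_le_mul_of_nonneg_right hub.le hεD.le
    have h2d : (0 : ℝ) < 2 ^ d := by positivity
    nlinarith
  -- rewrite LHS
  have hδ := delta_pos d n
  have e1 : (2 * c * (delta d n) ^ γ) ^ D = (2 * c) ^ D * ((delta d n) ^ γ) ^ D :=
    Real.mul_rpow h2c.le (Real.rpow_nonneg hδ.le γ)
  have e2 : ((delta d n) ^ γ) ^ D = (delta d n) ^ (γ * D) := (Real.rpow_mul hδ.le γ D).symm
  have e3 : γ * D = (d : ℝ) := by rw [hD]; field_simp
  have e4 : (delta d n) ^ ((d : ℝ)) = (delta d n) ^ (d : ℕ) := Real.rpow_natCast _ d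
  have e5 : (delta d n) ^ (d : ℕ) = ((2 : ℝ) ^ ((j + 1) * d))⁻¹ := by
    unfold delta
    rw [one_div, inv_pow, ← pow_mul]
  have lhsD : (2 * c * (delta d n) ^ γ) ^ D = (2 * c) ^ D * ((2 : ℝ) ^ ((j + 1) * d))⁻¹ := by
    rw [e1, e2, e3, e4, e5]
  have hfin : (2 * c * (delta d n) ^ γ) ^ D ≤ ε ^ D := by
    rw [lhsD]
    have := mul_lt_mul_of_pos_right hkey (inv_pos.2 hP)
    have heq : 2 ^ ((j + 1) * d) * ε ^ D * (2 ^ ((j + 1) * d))⁻¹ = ε ^ D := by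
      field_simp
    rw [heq] at this
    exact this.le
  have hlhs : (0 : ℝ) ≤ 2 * c * (delta d n) ^ γ := by positivity
  exact (Real.rpow_le_rpow_iff hlhs hε.le hDpos).1 hfin

end S5

/-- With `κ₁ = 2·8^d·(2c)^{d/γ}`, there is a deterministic algorithm that,
for every `(c,γ)`-Hölder `f` with nonempty level set `{f = a}`, every `ε > 0` and every
`n > κ₁/ε^{d/γ}`, outputs after `n` queries an `ε`-approximation of `{f = a}`. -/
theorem stmt5 (d : ℕ) (hd : 1 ≤ d) (a c γ : ℝ) (hc : 0 < c) (hγ : γ ∈ Set.Ioc (0 : ℝ) 1) :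
    ∃ A : Algorithm d, ∀ f : (Fin d → ℝ) → ℝ,
      HolderOn d c γ (unitCube d) f → (∃ x ∈ unitCube d, f x = a) →
      ∀ ε : ℝ, 0 < ε → ∀ n : ℕ,
        2 * 8 ^ d * (2 * c) ^ ((d : ℝ) / γ) / ε ^ ((d : ℝ) / γ) < (n : ℝ) →
        IsEpsApprox d f a ε (A.outputAfter f n) := by
  
  obtain ⟨hγ0, hγ1⟩ := hγ
  refine ⟨S5.algo d a c γ, ?_⟩
  intro f hf hx ε hε n hn
  obtain ⟨x₀, hx₀, hfx₀⟩ := hx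
  have hn1 : 1 ≤ n := by
    have hpos : (0:ℝ) < 2 * 8 ^ d * (2 * c) ^ ((d : ℝ) / γ) / ε ^ ((d : ℝ) / γ) := by positivity
    have h0 : (0:ℝ) < (n:ℝ) := lt_trans hpos hn
    exact_mod_cast h0
  have hbound := S5.eps_bound d hd c γ ε hc hγ0 hε n hn
  have hout : (S5.algo d a c γ).outputAfter f n =
      {x | x ∈ unitCube d ∧ ∃ i : Fin n,
        |f (S5.ept d (i:ℕ)) - a| ≤ c * (S5.delta d n) ^ γ ∧
        ∀ i', |x i' - S5.ept d (i:ℕ) i'| ≤ S5.delta d n} := by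
    unfold Algorithm.outputAfter
    simp only [S5.point_eq]
    rfl
  rw [hout]
  constructor
  · rintro x ⟨hxc, hfx⟩
    obtain ⟨k, hk, hcov⟩ := S5.cover d x hxc (S5.J d n)
    have hkn : k < n := lt_of_lt_of_le hk (S5.J_spec d n hn1)
    refine ⟨hxc, ⟨⟨k, hkn⟩, ?_, fun i' => hcov i'⟩⟩
    have hnorm : ‖S5.ept d k - x‖ ≤ S5.delta d n := by
      rw [pi_norm_le_iff_of_nonneg (S5.delta_pos d n).le]
      intro i
      rw [Pi.sub_apply, Real.norm_eq_abs, abs_sub_comm]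
      exact hcov i
    calc |f (S5.ept d k) - a| = |f (S5.ept d k) - f x| := by rw [hfx]
      _ ≤ c * ‖S5.ept d k - x‖ ^ γ := hf _ (S5.ept_mem d k) x hxc
      _ ≤ c * (S5.delta d n) ^ γ := by
          apply mul_le_mul_of_nonneg_left _ hc.le
          exact Real.rpow_le_rpow (norm_nonneg _) hnorm hγ0.le
  · rintro x ⟨hxc, i, hvi, hclose⟩
    refine ⟨hxc, ?_⟩
    have hnorm : ‖x - S5.ept d (i:ℕ)‖ ≤ S5.delta d n := by
      rw [pi_norm_le_iff_of_nonneg (S5.delta_pos d n).le]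
      intro i'
      rw [Pi.sub_apply, Real.norm_eq_abs]
      exact hclose i'
    have h1 : |f x - f (S5.ept d (i:ℕ))| ≤ c * ‖x - S5.ept d (i:ℕ)‖ ^ γ :=
      hf x hxc _ (S5.ept_mem d _)
    have h1' : |f x - f (S5.ept d (i:ℕ))| ≤ c * (S5.delta d n) ^ γ := by
      refine le_trans h1 ?_
      apply mul_le_mul_of_nonneg_left _ hc.le
      exact Real.rpow_le_rpow (norm_nonneg _) hnorm hγ0.le
    calc |f x - a| = |(f x - f (S5.ept d (i:ℕ))) + (f (S5.ept d (i:ℕ)) - a)| := by ring_nf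
      _ ≤ |f x - f (S5.ept d (i:ℕ))| + |f (S5.ept d (i:ℕ)) - a| := abs_add_le _ _
      _ ≤ c * (S5.delta d n) ^ γ + c * (S5.delta d n) ^ γ := add_le_add h1' hvi
      _ = 2 * c * (S5.delta d n) ^ γ := by ring
      _ ≤ ε := hbound
end
end

section
/- Fix d ≥ 1, a ∈ ℝ, c > 0, γ ∈ (0,1], an accuracy ε ∈ (0, c/(3d·2^γ)), and let κ := (c/(12d))^{d/γ}. Then for every positive integer n < κ/ε^{d/γ} and every deterministic algorithm A, there exists a (c,γ)-Hölder function f : [0,1]^d → ℝ such that the output S_n of A run on f after n queries is not an ε-approximation of the level set {f = a}. -/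
noncomputable section

/-- Subadditivity of `t ↦ t^γ` on nonnegative reals, for `γ ∈ [0,1]`. -/
lemma real_rpow_add_le {γ : ℝ} (hγ0 : 0 ≤ γ) (hγ1 : γ ≤ 1) {x y : ℝ} (hx : 0 ≤ x)
    (hy : 0 ≤ y) : (x + y) ^ γ ≤ x ^ γ + y ^ γ := by
  lift x to NNReal using hx
  lift y to NNReal using hy
  have := NNReal.rpow_add_le_add_rpow x y hγ0 hγ1
  exact_mod_cast this

/-- `t ↦ t^γ` is `(1,γ)`-Hölder on nonnegative reals. -/
lemma abs_rpow_sub_rpow_le {γ : ℝ} (hγ0 : 0 < γ) (hγ1 : γ ≤ 1) {s t : ℝ} (hs : 0 ≤ s)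
    (ht : 0 ≤ t) : |s ^ γ - t ^ γ| ≤ |s - t| ^ γ := by
  wlog h : t ≤ s generalizing s t
  · rw [abs_sub_comm, abs_sub_comm s t]
    exact this ht hs (le_of_not_ge h)
  have h1 : s ^ γ ≤ t ^ γ + (s - t) ^ γ := by
    have : s = t + (s - t) := by ring
    calc s ^ γ = (t + (s - t)) ^ γ := by rw [← this]
      _ ≤ t ^ γ + (s - t) ^ γ := real_rpow_add_le hγ0.le hγ1 ht (by linarith)
  have h2 : t ^ γ ≤ s ^ γ := Real.rpow_le_rpow ht h hγ0.le
  rw [abs_of_nonneg (by linarith : (0:ℝ) ≤ s ^ γ - t ^ γ), abs_of_nonneg (by linarith)]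
  linarith

/-- Lower bound for Hölder functions: for `ε ∈ (0, c/(3d·2^γ))`,
`κ = (c/(12d))^{d/γ}`, every positive `n < κ/ε^{d/γ}` and every deterministic algorithm `A`,
there is a `(c,γ)`-Hölder `f` such that the output of `A` run on `f` after `n` queries is
not an `ε`-approximation of `{f = a}`. -/
theorem stmt6 (d : ℕ) (hd : 1 ≤ d) (a c γ ε : ℝ) (hc : 0 < c) (hγ : γ ∈ Set.Ioc (0 : ℝ) 1)
    (hε0 : 0 < ε) (hε1 : ε < c / (3 * (d : ℝ) * (2 : ℝ) ^ γ))
    (n : ℕ) (hn : 0 < n)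
    (hnκ : (n : ℝ) < (c / (12 * (d : ℝ))) ^ ((d : ℝ) / γ) / ε ^ ((d : ℝ) / γ))
    (A : Algorithm d) :
    ∃ f : (Fin d → ℝ) → ℝ, HolderOn d c γ (unitCube d) f ∧
      ¬ IsEpsApprox d f a ε (A.outputAfter f n) := by
  obtain ⟨hγ0, hγ1⟩ := hγ
  set f₀ : (Fin d → ℝ) → ℝ := fun _ => a with hf₀
  by_cases hA : IsEpsApprox d f₀ a ε (A.outputAfter f₀ n)
  swap
  · -- the constant function already fools the algorithm
    refine ⟨f₀, ?_, hA⟩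
    intro x _ y _
    simp only [hf₀, sub_self, abs_zero]
    positivity
  -- notations
  have hD1 : (1:ℝ) ≤ (d:ℝ) := by exact_mod_cast hd
  have hD0 : (0:ℝ) < (d:ℝ) := by linarith
  set p : ℝ := (d : ℝ) / γ with hp
  have hp0 : 0 < p := by positivity
  have hpd : (d : ℝ) ≤ p := by
    rw [hp, le_div_iff₀ hγ0]; nlinarith
  set r : ℝ := (3 * ε / c) ^ (1 / γ) with hr
  have h3εc : (0:ℝ) < 3 * ε / c := by positivity
  have hr0 : 0 < r := Real.rpow_pos_of_pos h3εc _
  have hrγ : r ^ γ = 3 * ε / c := by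
    rw [hr, ← Real.rpow_mul h3εc.le, one_div, inv_mul_cancel₀ hγ0.ne', Real.rpow_one]
  -- the query points of the run on the constant function
  set x : ℕ → (Fin d → ℝ) := A.point f₀ with hx
  -- arithmetic: n * (2r)^d < 1
  have key : (n : ℝ) * (2 * r) ^ d < 1 := by
    have hrd : r ^ (d : ℕ) = (3 * ε / c) ^ p := by
      rw [hr, ← Real.rpow_natCast ((3 * ε / c) ^ (1 / γ)) d, ← Real.rpow_mul h3εc.le,
        one_div, inv_mul_eq_div]
    have hB0 : (0:ℝ) < 2 ^ d * (3 * ε / c) ^ p := by positivity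
    have h1 : (n : ℝ) * (2 * r) ^ d
        < ((c / (12 * (d : ℝ))) ^ p / ε ^ p) * (2 ^ d * (3 * ε / c) ^ p) := by
      rw [mul_pow, ← hrd]
      calc (n : ℝ) * (2 ^ d * r ^ d) < ((c / (12 * (d : ℝ))) ^ p / ε ^ p) * (2 ^ d * r ^ d) := by
            apply mul_lt_mul_of_pos_right hnκ
            rw [hrd]; exact hB0
        _ = ((c / (12 * (d : ℝ))) ^ p / ε ^ p) * (2 ^ d * r ^ d) := rfl
    have h2 : ((c / (12 * (d : ℝ))) ^ p / ε ^ p) * (2 ^ d * (3 * ε / c) ^ p)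
        = 2 ^ d * (1 / (4 * (d : ℝ))) ^ p := by
      have hbase : (c / (12 * (d:ℝ)) / ε) * (3 * ε / c) = 1 / (4 * (d:ℝ)) := by
        field_simp; ring
      rw [← Real.div_rpow (by positivity) (by positivity)]
      rw [show (c / (12 * (d:ℝ)) / ε) ^ p * (2 ^ d * (3 * ε / c) ^ p)
          = 2 ^ d * ((c / (12 * (d:ℝ)) / ε) ^ p * (3 * ε / c) ^ p) by ring]
      rw [← Real.mul_rpow (by positivity) (by positivity), hbase]
    have h3 : (1 / (4 * (d : ℝ))) ^ p ≤ (1 / (4 * (d : ℝ))) ^ ((d : ℕ) : ℝ) := by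
      apply Real.rpow_le_rpow_of_exponent_ge (by positivity)
      · rw [div_le_one (by positivity)]; linarith
      · exact_mod_cast hpd
    have h4 : (2:ℝ) ^ d * (1 / (4 * (d : ℝ))) ^ ((d : ℕ) : ℝ) ≤ 1 := by
      rw [Real.rpow_natCast, ← mul_pow]
      apply pow_le_one₀ (by positivity)
      rw [mul_one_div, div_le_one (by positivity)]
      linarith
    calc (n : ℝ) * (2 * r) ^ d < 2 ^ d * (1 / (4 * (d : ℝ))) ^ p := by rw [← h2]; exact h1
      _ ≤ 2 ^ d * (1 / (4 * (d : ℝ))) ^ ((d : ℕ) : ℝ) := by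
          apply mul_le_mul_of_nonneg_left h3 (by positivity)
      _ ≤ 1 := h4
  -- find a point z of the cube far from all query points
  have hz : ∃ z ∈ unitCube d, ∀ i : Fin n, r ≤ ‖x i - z‖ := by
    by_contra hcon
    push_neg at hcon
    have hsub : unitCube d ⊆ ⋃ i : Fin n, Metric.ball (x i) r := by
      intro z hzc
      obtain ⟨i, hi⟩ := hcon z hzc
      exact Set.mem_iUnion.2 ⟨i, by rwa [Metric.mem_ball, dist_comm, dist_eq_norm]⟩
    have hvol1 : MeasureTheory.volume (unitCube d) = 1 := by
      rw [unitCube, Real.volume_Icc_pi]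
      simp
    have hle : (1 : ENNReal) ≤ MeasureTheory.volume (⋃ i : Fin n, Metric.ball (x i) r) := by
      rw [← hvol1]; exact MeasureTheory.measure_mono hsub
    have hsum : MeasureTheory.volume (⋃ i : Fin n, Metric.ball (x i) r)
        ≤ ∑ i : Fin n, MeasureTheory.volume (Metric.ball (x i) r) :=
      MeasureTheory.measure_iUnion_fintype_le _ _
    have hball : ∀ i : Fin n, MeasureTheory.volume (Metric.ball (x i) r)
        = ENNReal.ofReal ((2 * r) ^ d) := by
      intro i
      rw [Real.volume_pi_ball _ hr0, Fintype.card_fin]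
    have : (1 : ENNReal) ≤ ENNReal.ofReal ((n : ℝ) * (2 * r) ^ d) := by
      refine hle.trans (hsum.trans ?_)
      simp only [hball, Finset.sum_const, Finset.card_univ, Fintype.card_fin, nsmul_eq_mul]
      rw [ENNReal.ofReal_mul (by positivity)]
      simp
    rw [ENNReal.one_le_ofReal] at this
    linarith
  obtain ⟨z, hzc, hzfar⟩ := hz
  -- the bump function
  set f : (Fin d → ℝ) → ℝ := fun y => a + max (3 * ε - c * ‖y - z‖ ^ γ) 0 with hf
  have hHolder : HolderOn d c γ (unitCube d) f := by
    intro u _ v _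
    have h1 : |f u - f v| ≤ |(3 * ε - c * ‖u - z‖ ^ γ) - (3 * ε - c * ‖v - z‖ ^ γ)| := by
      have := abs_max_sub_max_le_abs (3 * ε - c * ‖u - z‖ ^ γ) (3 * ε - c * ‖v - z‖ ^ γ) 0
      calc |f u - f v| = |max (3 * ε - c * ‖u - z‖ ^ γ) 0 - max (3 * ε - c * ‖v - z‖ ^ γ) 0| := by
            simp only [hf]; congr 1; ring
        _ ≤ _ := this
    have h2 : |(3 * ε - c * ‖u - z‖ ^ γ) - (3 * ε - c * ‖v - z‖ ^ γ)|
        = c * |‖u - z‖ ^ γ - ‖v - z‖ ^ γ| := by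
      have heq : (3 * ε - c * ‖u - z‖ ^ γ) - (3 * ε - c * ‖v - z‖ ^ γ)
          = c * (‖v - z‖ ^ γ - ‖u - z‖ ^ γ) := by ring
      rw [heq, abs_mul, abs_of_pos hc, abs_sub_comm]
    have h3 : |‖u - z‖ ^ γ - ‖v - z‖ ^ γ| ≤ ‖u - v‖ ^ γ := by
      refine (abs_rpow_sub_rpow_le hγ0 hγ1 (norm_nonneg _) (norm_nonneg _)).trans ?_
      apply Real.rpow_le_rpow (abs_nonneg _) _ hγ0.le
      have := abs_norm_sub_norm_le (u - z) (v - z)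
      simpa [sub_sub_sub_cancel_right] using this
    calc |f u - f v| ≤ c * |‖u - z‖ ^ γ - ‖v - z‖ ^ γ| := h2 ▸ h1
      _ ≤ c * ‖u - v‖ ^ γ := mul_le_mul_of_nonneg_left h3 hc.le
  -- f vanishes (equals a) at all query points of the run on f₀
  have hfx : ∀ i : Fin n, f (x i) = a := by
    intro i
    have h1 : 3 * ε / c ≤ ‖x i - z‖ ^ γ := by
      rw [← hrγ]
      exact Real.rpow_le_rpow hr0.le (hzfar i) hγ0.le
    have h2 : 3 * ε - c * ‖x i - z‖ ^ γ ≤ 0 := by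
      rw [div_le_iff₀ hc] at h1
      nlinarith
    rw [hf]
    simp [max_eq_right h2]
  -- the run of A on f coincides with the run on f₀
  have hpteq : ∀ (g : (Fin d → ℝ) → ℝ) (m : ℕ),
      A.point g m = A.query m (fun i : Fin m => g (A.point g i)) := by
    intro g m
    rw [Algorithm.point]
  have hpt : ∀ k, k < n → A.point f k = A.point f₀ k := by
    intro k
    induction k using Nat.strong_induction_on with
    | _ k ih =>
      intro hk
      rw [hpteq f k, hpteq f₀ k]
      have harg : (fun i : Fin k => f (A.point f i)) = fun i : Fin k => f₀ (A.point f₀ i) := by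
        funext i
        rw [ih i i.isLt (lt_trans i.isLt hk)]
        have h := hfx ⟨i, lt_trans i.isLt hk⟩
        rw [hx] at h
        exact h.trans (by rw [hf₀])
      rw [harg]
  have hout : A.outputAfter f n = A.outputAfter f₀ n := by
    rw [Algorithm.outputAfter, Algorithm.outputAfter]
    have harg : (fun i : Fin n => f (A.point f i)) = fun i : Fin n => f₀ (A.point f₀ i) := by
      funext i
      rw [hpt i i.isLt]
      have h := hfx i
      rw [hx] at h
      exact h.trans (by rw [hf₀])
    rw [harg]
  -- f at z equals a + 3ε
  have hfz : f z = a + 3 * ε := by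
    rw [hf]
    simp only [sub_self, norm_zero, Real.zero_rpow hγ0.ne', mul_zero, sub_zero]
    rw [max_eq_left (by linarith)]
  -- z is in the output set
  have hzS : z ∈ A.outputAfter f₀ n := by
    apply hA.1
    exact ⟨hzc, rfl⟩
  refine ⟨f, hHolder, fun hbad => ?_⟩
  have hmem := hbad.2 (by rw [hout]; exact hzS)
  have h : |f z - a| ≤ ε := hmem.2
  rw [hfz, add_sub_cancel_left, abs_of_pos (by linarith)] at h
  linarith
end
end

section
/- Let d ≥ 1, c > 0, γ ∈ (0,1], ε > 0, and set η := (6εd·2^{1−γ}/c)^{1/γ}; assume η ≤ 1/4. Then for every z ∈ ℝ^d, the restriction of the bump function f_{2ε,η,z} to [0,1]^d is (c,γ)-Hölder with respect to the sup-norm. -/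
noncomputable section

/-- The one-dimensional bump function `f̃(x) = exp(-x²/(1-x²))` on `(-1,1)`, `0` elsewhere. -/
noncomputable def bump1 (x : ℝ) : ℝ :=
  if x ∈ Set.Ioo (-1 : ℝ) 1 then Real.exp (-x ^ 2 / (1 - x ^ 2)) else 0

/-- The `d`-dimensional bump `f_{α,η,z}(x) = α ∏_j f̃((x_j - z_j)/η)`. -/
noncomputable def bump (d : ℕ) (α η : ℝ) (z : Fin d → ℝ) (x : Fin d → ℝ) : ℝ :=
  α * ∏ j, bump1 ((x j - z j) / η)

lemma hasDerivAt_expNegInvGlue (x : ℝ) :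
    HasDerivAt expNegInvGlue (x⁻¹ ^ 2 * expNegInvGlue x) x := by
  simpa using expNegInvGlue.hasDerivAt_polynomial_eval_inv_mul 1 x

lemma deriv_bound (x : ℝ) : |x⁻¹ ^ 2 * expNegInvGlue x| ≤ 4 * Real.exp (-2) := by
  rcases le_or_gt x 0 with hx | hx
  · rw [expNegInvGlue.zero_of_nonpos hx, mul_zero, abs_zero]; positivity
  · set t := x⁻¹ with ht
    have htpos : 0 < t := inv_pos.2 hx
    have hval : expNegInvGlue x = Real.exp (-t) := by
      rw [expNegInvGlue, if_neg hx.not_ge]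
    rw [hval, abs_of_nonneg (by positivity)]
    have h1 : t / 2 ≤ Real.exp ((t - 2) / 2) := by
      have := Real.add_one_le_exp ((t - 2) / 2); linarith
    have h2 : (t / 2) ^ 2 ≤ Real.exp ((t - 2) / 2) ^ 2 :=
      pow_le_pow_left₀ (by positivity) h1 2
    rw [← Real.exp_nat_mul] at h2
    have h3 : t ^ 2 ≤ 4 * Real.exp (t - 2) := by
      have h : ((2 : ℕ) : ℝ) * ((t - 2) / 2) = t - 2 := by push_cast; ring
      rw [h] at h2; nlinarith
    have h4 : Real.exp (t - 2) * Real.exp (-t) = Real.exp (-2) := by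
      rw [← Real.exp_add]; ring_nf
    nlinarith [Real.exp_pos (-t), Real.exp_pos (-2)]

lemma expNegInvGlue_lip (a b : ℝ) :
    |expNegInvGlue a - expNegInvGlue b| ≤ 4 * Real.exp (-2) * |a - b| := by
  have := convex_univ.norm_image_sub_le_of_norm_hasDerivWithin_le
    (f' := fun x => x⁻¹ ^ 2 * expNegInvGlue x)
    (fun x _ => (hasDerivAt_expNegInvGlue x).hasDerivWithinAt)
    (fun x _ => deriv_bound x) (Set.mem_univ b) (Set.mem_univ a)
  simpa [Real.norm_eq_abs] using this

lemma bump1_eq (x : ℝ) : bump1 x = Real.exp 1 * expNegInvGlue (1 - x ^ 2) := by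
  unfold bump1 expNegInvGlue
  by_cases hx : x ∈ Set.Ioo (-1 : ℝ) 1
  · have h1 : 0 < 1 - x ^ 2 := by nlinarith [hx.1, hx.2]
    rw [if_pos hx, if_neg (not_le.2 h1), ← Real.exp_add]
    congr 1; field_simp; ring
  · have h1 : 1 - x ^ 2 ≤ 0 := by
      simp only [Set.mem_Ioo, not_and_or, not_lt] at hx
      rcases hx with h | h <;> nlinarith
    rw [if_neg hx, if_pos h1, mul_zero]

lemma bump1_zero_of_abs_one_le {x : ℝ} (h : 1 ≤ |x|) : bump1 x = 0 := by
  rw [bump1_eq, expNegInvGlue.zero_of_nonpos, mul_zero]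
  nlinarith [sq_abs x]

lemma bump1_clamp (a : ℝ) : bump1 (max (-1) (min 1 a)) = bump1 a := by
  rcases le_total a (-1) with h | h
  · rw [min_eq_right (by linarith), max_eq_left h]
    rw [bump1_zero_of_abs_one_le (by rw [abs_of_nonpos (by norm_num)]; norm_num),
      bump1_zero_of_abs_one_le (by rw [abs_of_nonpos (by linarith)]; linarith)]
  · rcases le_total 1 a with h2 | h2
    · rw [min_eq_left h2, max_eq_right (by norm_num)]
      rw [bump1_zero_of_abs_one_le (by norm_num),
        bump1_zero_of_abs_one_le (by rw [abs_of_nonneg (by linarith)]; linarith)]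
    · rw [min_eq_right h2, max_eq_right h]

lemma bump1_lip_core {a b : ℝ} (ha : |a| ≤ 1) (hb : |b| ≤ 1) :
    |bump1 a - bump1 b| ≤ 3 * |a - b| := by
  rw [bump1_eq, bump1_eq, ← mul_sub, abs_mul, abs_of_nonneg (Real.exp_pos 1).le]
  have h1 := expNegInvGlue_lip (1 - a ^ 2) (1 - b ^ 2)
  have h2 : |1 - a ^ 2 - (1 - b ^ 2)| ≤ 2 * |a - b| := by
    have : 1 - a ^ 2 - (1 - b ^ 2) = (b + a) * (b - a) := by ring
    rw [this, abs_mul, abs_sub_comm b a]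
    have hba : |b + a| ≤ 2 := by
      have := abs_add_le b a; linarith [abs_le.1 ha, abs_le.1 hb,
        (abs_add_le b a).trans (by linarith : |b| + |a| ≤ 2)]
    nlinarith [abs_nonneg (a - b), abs_nonneg (b + a)]
  have h9 : (2.7182818283 : ℝ) < Real.exp 1 := Real.exp_one_gt_d9
  have he : Real.exp 1 * Real.exp (-2) * Real.exp 1 = 1 := by
    rw [← Real.exp_add, ← Real.exp_add]; norm_num
  have hkey : Real.exp 1 * (4 * Real.exp (-2)) ≤ 3 / 2 := by
    nlinarith [Real.exp_pos (-2), Real.exp_pos 1]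
  have h3 : Real.exp 1 * |expNegInvGlue (1 - a ^ 2) - expNegInvGlue (1 - b ^ 2)| ≤
      Real.exp 1 * (4 * Real.exp (-2) * (2 * |a - b|)) :=
    mul_le_mul_of_nonneg_left
      (h1.trans (mul_le_mul_of_nonneg_left h2 (by positivity))) (Real.exp_pos 1).le
  nlinarith [abs_nonneg (a - b), hkey, mul_le_mul_of_nonneg_right hkey
    (by positivity : (0:ℝ) ≤ 2 * |a - b|)]

lemma bump1_lip (a b : ℝ) : |bump1 a - bump1 b| ≤ 3 * |a - b| := by
  have ha : |max (-1) (min 1 a)| ≤ 1 := by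
    rw [abs_le]; constructor
    · exact le_max_left _ _
    · exact max_le (by norm_num) (min_le_left _ _)
  have hb : |max (-1) (min 1 b)| ≤ 1 := by
    rw [abs_le]; constructor
    · exact le_max_left _ _
    · exact max_le (by norm_num) (min_le_left _ _)
  have hlip : |max (-1) (min 1 a) - max (-1) (min 1 b)| ≤ |a - b| := by
    have h1 := abs_max_sub_max_le_max (-1 : ℝ) (min 1 a) (-1) (min 1 b)
    have h2 := abs_min_sub_min_le_max (1 : ℝ) a 1 b
    simp only [sub_self, abs_zero] at h1 h2
    calc |max (-1) (min 1 a) - max (-1) (min 1 b)| ≤ max 0 |min 1 a - min 1 b| := h1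
      _ = |min 1 a - min 1 b| := max_eq_right (abs_nonneg _)
      _ ≤ max 0 |a - b| := h2
      _ = |a - b| := max_eq_right (abs_nonneg _)
  calc |bump1 a - bump1 b|
      = |bump1 (max (-1) (min 1 a)) - bump1 (max (-1) (min 1 b))| := by
        rw [bump1_clamp, bump1_clamp]
    _ ≤ 3 * |max (-1) (min 1 a) - max (-1) (min 1 b)| := bump1_lip_core ha hb
    _ ≤ 3 * |a - b| := by linarith

lemma bump1_mem (x : ℝ) : bump1 x ∈ Set.Icc (0 : ℝ) 1 := by
  unfold bump1
  split_ifs with hx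
  · refine ⟨(Real.exp_pos _).le, Real.exp_le_one_iff.2 ?_⟩
    have h1 : 0 < 1 - x ^ 2 := by nlinarith [hx.1, hx.2]
    exact div_nonpos_of_nonpos_of_nonneg (by nlinarith [sq_nonneg x]) h1.le
  · exact ⟨le_rfl, zero_le_one⟩

lemma abs_prod_sub_prod_le {ι : Type*} (s : Finset ι) (f g : ι → ℝ)
    (hf : ∀ i, |f i| ≤ 1) (hg : ∀ i, |g i| ≤ 1) :
    |∏ i ∈ s, f i - ∏ i ∈ s, g i| ≤ ∑ i ∈ s, |f i - g i| := by
  induction s using Finset.cons_induction with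
  | empty => simp
  | cons a s ha ih =>
    rw [Finset.prod_cons, Finset.prod_cons, Finset.sum_cons]
    have hPg : |∏ i ∈ s, g i| ≤ 1 := by
      rw [Finset.abs_prod]
      exact Finset.prod_le_one (fun i _ => abs_nonneg _) (fun i _ => hg i)
    have key : f a * ∏ i ∈ s, f i - g a * ∏ i ∈ s, g i =
        f a * (∏ i ∈ s, f i - ∏ i ∈ s, g i) + (f a - g a) * ∏ i ∈ s, g i := by ring
    rw [key]
    calc |f a * (∏ i ∈ s, f i - ∏ i ∈ s, g i) + (f a - g a) * ∏ i ∈ s, g i|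
        ≤ |f a| * |∏ i ∈ s, f i - ∏ i ∈ s, g i| + |f a - g a| * |∏ i ∈ s, g i| := by
          rw [← abs_mul, ← abs_mul]; exact abs_add_le _ _
      _ ≤ 1 * (∑ i ∈ s, |f i - g i|) + |f a - g a| * 1 := by
          have t1 : |f a| * |∏ i ∈ s, f i - ∏ i ∈ s, g i| ≤ 1 * ∑ i ∈ s, |f i - g i| :=
            mul_le_mul (hf a) ih (abs_nonneg _) zero_le_one
          have t2 : |f a - g a| * |∏ i ∈ s, g i| ≤ |f a - g a| * 1 :=
            mul_le_mul_of_nonneg_left hPg (abs_nonneg _)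
          linarith
      _ = |f a - g a| + ∑ i ∈ s, |f i - g i| := by ring

/-- With `η = (6εd·2^{1-γ}/c)^{1/γ} ≤ 1/4`, for every `z ∈ ℝ^d` the
restriction of `f_{2ε,η,z}` to `[0,1]^d` is `(c,γ)`-Hölder w.r.t. the sup-norm. -/
theorem stmt8 (d : ℕ) (hd : 1 ≤ d) (c γ ε η : ℝ) (hc : 0 < c)
    (hγ : γ ∈ Set.Ioc (0 : ℝ) 1) (hε : 0 < ε)
    (hη : η = (6 * ε * (d : ℝ) * (2 : ℝ) ^ (1 - γ) / c) ^ (1 / γ)) (hη4 : η ≤ 1 / 4) :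
    ∀ z : Fin d → ℝ, HolderOn d c γ (unitCube d) (bump d (2 * ε) η z) := by
  intro z x hx y hy
  have hγ0 : 0 < γ := hγ.1
  have hγ1 : γ ≤ 1 := hγ.2
  have hd1 : (1 : ℝ) ≤ (d : ℝ) := by exact_mod_cast hd
  have h2γ : (1 : ℝ) ≤ (2 : ℝ) ^ (1 - γ) := Real.one_le_rpow one_le_two (by linarith)
  have hB : 0 < 6 * ε * (d : ℝ) * (2 : ℝ) ^ (1 - γ) / c := by positivity
  have hη0 : 0 < η := hη ▸ Real.rpow_pos_of_pos hB _
  have hηγ : η ^ γ = 6 * ε * (d : ℝ) * (2 : ℝ) ^ (1 - γ) / c := by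
    rw [hη, ← Real.rpow_mul hB.le, one_div, inv_mul_cancel₀ (ne_of_gt hγ0), Real.rpow_one]
  have hcηγ : c * η ^ γ = 6 * ε * (d : ℝ) * (2 : ℝ) ^ (1 - γ) := by
    rw [hηγ]; field_simp
  set N := ‖x - y‖ with hNdef
  have hN0 : 0 ≤ N := norm_nonneg _
  have hcoord : ∀ i, |bump1 ((x i - z i) / η) - bump1 ((y i - z i) / η)| ≤ 3 / η * N := by
    intro i
    have h1 := bump1_lip ((x i - z i) / η) ((y i - z i) / η)
    have h2 : (x i - z i) / η - (y i - z i) / η = (x i - y i) / η := by ring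
    have h3 : |x i - y i| ≤ N := by
      have := norm_le_pi_norm (x - y) i
      simpa [Real.norm_eq_abs] using this
    rw [h2, abs_div, abs_of_pos hη0] at h1
    have h4 : 3 * (|x i - y i| / η) ≤ 3 / η * N := by
      rw [show 3 * (|x i - y i| / η) = 3 / η * |x i - y i| from by ring]
      exact mul_le_mul_of_nonneg_left h3 (by positivity)
    linarith
  have habs1 : ∀ t : ℝ, |bump1 t| ≤ 1 := fun t =>
    abs_le.2 ⟨by linarith [(bump1_mem t).1], (bump1_mem t).2⟩
  have hsum : |(∏ j, bump1 ((x j - z j) / η)) - ∏ j, bump1 ((y j - z j) / η)| ≤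
      (d : ℝ) * (3 / η * N) := by
    refine (abs_prod_sub_prod_le Finset.univ _ _ (fun i => habs1 _) (fun i => habs1 _)).trans ?_
    calc ∑ i, |bump1 ((x i - z i) / η) - bump1 ((y i - z i) / η)|
        ≤ ∑ _i : Fin d, 3 / η * N := Finset.sum_le_sum (fun i _ => hcoord i)
      _ = (d : ℝ) * (3 / η * N) := by
          simp [Finset.sum_const, Finset.card_univ, nsmul_eq_mul]
  have hdiff1 : |bump d (2 * ε) η z x - bump d (2 * ε) η z y| ≤ 2 * ε * ((d : ℝ) * (3 / η * N)) := by
    unfold bump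
    rw [← mul_sub, abs_mul, abs_of_pos (by positivity : (0 : ℝ) < 2 * ε)]
    exact mul_le_mul_of_nonneg_left hsum (by positivity)
  have hP : ∀ w : Fin d → ℝ, (∏ j, bump1 ((w j - z j) / η)) ∈ Set.Icc (0 : ℝ) 1 := fun w =>
    ⟨Finset.prod_nonneg fun i _ => (bump1_mem _).1,
      Finset.prod_le_one (fun i _ => (bump1_mem _).1) fun i _ => (bump1_mem _).2⟩
  have hdiff2 : |bump d (2 * ε) η z x - bump d (2 * ε) η z y| ≤ 2 * ε := by
    unfold bump
    rw [← mul_sub, abs_mul, abs_of_pos (by positivity : (0 : ℝ) < 2 * ε)]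
    have h1 := hP x; have h2 := hP y
    have h3 : |(∏ j, bump1 ((x j - z j) / η)) - ∏ j, bump1 ((y j - z j) / η)| ≤ 1 :=
      abs_le.2 ⟨by linarith [h1.1, h1.2, h2.1, h2.2], by linarith [h1.1, h1.2, h2.1, h2.2]⟩
    calc 2 * ε * |(∏ j, bump1 ((x j - z j) / η)) - ∏ j, bump1 ((y j - z j) / η)|
        ≤ 2 * ε * 1 := mul_le_mul_of_nonneg_left h3 (by positivity)
      _ = 2 * ε := mul_one _
  rcases le_or_gt N η with hle | hlt
  · rcases eq_or_lt_of_le hN0 with h0 | hNpos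
    · have hxy : x = y := sub_eq_zero.1 (norm_eq_zero.1 h0.symm)
      rw [hxy, sub_self, abs_zero]
      positivity
    · have hNγ : N ^ (1 - γ) * N ^ γ = N := by
        rw [← Real.rpow_add hNpos]; norm_num
      have hηsplit : η ^ (1 - γ) * η ^ γ = η := by
        rw [← Real.rpow_add hη0]; norm_num
      have hmono : N ^ (1 - γ) ≤ η ^ (1 - γ) := Real.rpow_le_rpow hN0 hle (by linarith)
      have pos : 0 ≤ N ^ γ := Real.rpow_nonneg hN0 _
      have m1 : N ^ (1 - γ) * N ^ γ ≤ η ^ (1 - γ) * N ^ γ :=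
        mul_le_mul_of_nonneg_right hmono pos
      have m2 : η ^ (1 - γ) * N ^ γ ≤ (2 : ℝ) ^ (1 - γ) * (η ^ (1 - γ) * N ^ γ) :=
        le_mul_of_one_le_left (by positivity) h2γ
      have m3 := mul_le_mul_of_nonneg_left (m1.trans m2)
        (by positivity : (0 : ℝ) ≤ 6 * ε * (d : ℝ))
      have final : 6 * ε * (d : ℝ) * N / η ≤ c * N ^ γ := by
        rw [div_le_iff₀ hη0]
        calc 6 * ε * (d : ℝ) * N = 6 * ε * (d : ℝ) * (N ^ (1 - γ) * N ^ γ) := by rw [hNγ]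
          _ ≤ 6 * ε * (d : ℝ) * ((2 : ℝ) ^ (1 - γ) * (η ^ (1 - γ) * N ^ γ)) := m3
          _ = (c * η ^ γ) * (η ^ (1 - γ) * N ^ γ) := by rw [hcηγ]; ring
          _ = c * N ^ γ * η := by linear_combination c * N ^ γ * hηsplit
      calc |bump d (2 * ε) η z x - bump d (2 * ε) η z y|
          ≤ 2 * ε * ((d : ℝ) * (3 / η * N)) := hdiff1
        _ = 6 * ε * (d : ℝ) * N / η := by ring
        _ ≤ c * N ^ γ := final
  · have hr : c * η ^ γ ≤ c * N ^ γ :=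
      mul_le_mul_of_nonneg_left (Real.rpow_le_rpow hη0.le hlt.le hγ0.le) hc.le
    have h6 : 2 * ε ≤ 6 * ε * (d : ℝ) * (2 : ℝ) ^ (1 - γ) := by
      nlinarith [mul_le_mul_of_nonneg_left hd1 (by linarith : (0:ℝ) ≤ 6 * ε),
        mul_le_mul_of_nonneg_left h2γ (by positivity : (0:ℝ) ≤ 6 * ε * (d : ℝ))]
    calc |bump d (2 * ε) η z x - bump d (2 * ε) η z y| ≤ 2 * ε := hdiff2
      _ ≤ c * N ^ γ := by rw [← hcηγ] at h6; linarith
end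
end

section
/- Let c₁ > 0, γ₁ ∈ (0,1], ℓ ∈ (0,1], u = (u_1,…,u_d) ∈ [0,1−ℓ]^d, C := ∏_{j=1}^d [u_j, u_j+ℓ] with vertex set V := ∏_{j=1}^d {u_j, u_j+ℓ}, and let f : C → ℝ be (c₁,γ₁)-gradient-Hölder. Define h : C → ℝ by h(x) := Σ_{v∈V} f(v)·∏_{j=1}^d p_{v_j}(x_j), where p_{v_j}(x_j) := (1 − (x_j − u_j)/ℓ) if v_j = u_j and p_{v_j}(x_j) := (x_j − u_j)/ℓ if v_j = u_j + ℓ. Then h(v) = f(v) for every vertex v ∈ V, and sup_{x∈C} |h(x) − f(x)| ≤ c₁·d·ℓ^{1+γ₁}. -/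
/-!
The interpolant is the average of the vertex values `f v` against the product weights
`w_v(x) = ∏_j p_{v_j}(x_j)`, which are nonnegative, sum to `1` and have barycentre `x`. Hence the
linear part of `f` at `x` is reproduced exactly and
`h x - f x = ∑_v w_v(x) (f v - f x - Df(x)(v - x))`. By the mean value inequality each bracket is
at most `sup_z ‖Df(z) - Df(x)‖ · ‖v - x‖ ≤ d c₁ ℓ^γ₁ · ℓ`; the factor `d` comes from the operator
norm of a linear form on `(ℝ^d, ‖·‖_∞)`, which is the `ℓ¹`-norm of its coefficients.
-/

noncomputable section

/-- The `j`-th partial derivatives of `F`, collected into a vector of `Fin d → ℝ`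
(whose norm is the sup-norm of the gradient). -/
noncomputable def gradVec (d : ℕ) (F : (Fin d → ℝ) → ℝ) (x : Fin d → ℝ) : Fin d → ℝ :=
  fun j => fderiv ℝ F x (Pi.single j 1)

/-- `f` is `(c₁,γ₁)`-gradient-Hölder on `E`: it is the restriction to `E` of a `C¹` function
on `ℝ^d` whose gradient is `(c₁,γ₁)`-Hölder on `E` w.r.t. the sup-norm. -/
def GradHolderOn (d : ℕ) (c₁ γ₁ : ℝ) (E : Set (Fin d → ℝ)) (f : (Fin d → ℝ) → ℝ) : Prop :=
  ∃ F : (Fin d → ℝ) → ℝ, ContDiff ℝ 1 F ∧ Set.EqOn f F E ∧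
    ∀ x ∈ E, ∀ y ∈ E, ‖gradVec d F x - gradVec d F y‖ ≤ c₁ * ‖x - y‖ ^ γ₁

/-- The vertex of the cube `∏_j [u_j, u_j + ℓ]` selected by `s : Fin d → Bool`. -/
def vertex (d : ℕ) (ℓ : ℝ) (u : Fin d → ℝ) (s : Fin d → Bool) : Fin d → ℝ :=
  fun j => u j + if s j then ℓ else 0

/-- The multilinear interpolation `h(x) = ∑_{v ∈ V} f(v) ∏_j p_{v_j}(x_j)` of `f` at the
vertices of the cube `∏_j [u_j, u_j + ℓ]`. -/
noncomputable def interp (d : ℕ) (ℓ : ℝ) (u : Fin d → ℝ) (f : (Fin d → ℝ) → ℝ)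
    (x : Fin d → ℝ) : ℝ :=
  ∑ s : Fin d → Bool, f (vertex d ℓ u s) *
    ∏ j, (if s j then (x j - u j) / ℓ else 1 - (x j - u j) / ℓ)
open Finset

section VertexWeight

variable {ι : Type*} [Fintype ι]

def vertexWeight (t : ι → ℝ) (s : ι → Bool) : ℝ :=
  ∏ j, if s j then t j else 1 - t j

lemma vertexWeight_nonneg {t : ι → ℝ} (ht : ∀ j, t j ∈ Set.Icc 0 1) (s : ι → Bool) :
    0 ≤ vertexWeight t s :=
  prod_nonneg fun j _ => by
    obtain ⟨h0, h1⟩ := ht j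
    split <;> linarith

lemma sum_vertexWeight [DecidableEq ι] (t : ι → ℝ) : ∑ s, vertexWeight t s = 1 := by
  refine (Fintype.prod_sum fun j (b : Bool) => if b then t j else 1 - t j).symm.trans ?_
  simp

lemma sum_vertexWeight_mul_ite [DecidableEq ι] (t : ι → ℝ) (j : ι) (a b : ℝ) :
    ∑ s, vertexWeight t s * (if s j then a else b) = t j * a + (1 - t j) * b := by
  have hfactor : ∀ s : ι → Bool,
      (if s j then a else b) = ∏ k, if k = j then (if s k then a else b) else 1 := by
    intro s
    rw [prod_ite_eq']
    simp
  simp only [hfactor, vertexWeight, ← prod_mul_distrib]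
  refine (Fintype.prod_sum fun k (c : Bool) => (if c then t k else 1 - t k) *
    if k = j then (if c then a else b) else 1).symm.trans ?_
  rw [prod_eq_single j (fun k _ hk => by simp [hk]) (by simp)]
  simp

lemma vertexWeight_ite_one_zero (s s' : ι → Bool) :
    vertexWeight (fun j => if s j then 1 else 0) s' = if s' = s then 1 else 0 := by
  split_ifs with h
  · subst h
    exact prod_eq_one fun j _ => by cases hs : s' j <;> simp [hs]
  · obtain ⟨j, hj⟩ := Function.ne_iff.mp h
    exact prod_eq_zero (mem_univ j) (by cases hs : s j <;> simp_all)

end VertexWeight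

lemma ContinuousLinearMap.norm_le_card_mul_norm_apply_single {ι : Type*} [Fintype ι]
    [DecidableEq ι] (L : (ι → ℝ) →L[ℝ] ℝ) :
    ‖L‖ ≤ Fintype.card ι * ‖fun j => L (Pi.single j 1)‖ := by
  refine L.opNorm_le_bound (by positivity) fun y => ?_
  have hL : L y = ∑ j, y j * L (Pi.single j 1) := by
    conv_lhs => rw [← univ_sum_single y]
    simp only [map_sum]
    refine sum_congr rfl fun j _ => ?_
    rw [← smul_eq_mul, ← map_smul, ← Pi.single_smul', smul_eq_mul, mul_one]
  calc ‖L y‖ ≤ ∑ j, ‖y j‖ * ‖L (Pi.single j 1)‖ := by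
        rw [hL]
        exact (norm_sum_le _ _).trans_eq (by simp only [norm_mul])
    _ ≤ ∑ _j : ι, ‖y‖ * ‖fun j => L (Pi.single j 1)‖ := by
        gcongr with j
        · exact norm_le_pi_norm y j
        · exact norm_le_pi_norm (fun j => L (Pi.single j 1)) j
    _ = Fintype.card ι * ‖fun j => L (Pi.single j 1)‖ * ‖y‖ := by
        rw [sum_const, card_univ, nsmul_eq_mul]
        ring

lemma norm_fderiv_sub_fderiv_le (d : ℕ) (F : (Fin d → ℝ) → ℝ) (x y : Fin d → ℝ) :
    ‖fderiv ℝ F x - fderiv ℝ F y‖ ≤ d * ‖gradVec d F x - gradVec d F y‖ := by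
  have h := (fderiv ℝ F x - fderiv ℝ F y).norm_le_card_mul_norm_apply_single
  rwa [Fintype.card_fin] at h

theorem Convex.abs_sum_mul_sub_le_of_norm_fderiv_sub_le {ι E : Type*} [Fintype ι]
    [NormedAddCommGroup E] [NormedSpace ℝ E] {s : Set E} (hs : Convex ℝ s) {F : E → ℝ}
    (hF : ∀ z ∈ s, DifferentiableAt ℝ F z) {x : E} (hx : x ∈ s) {K r : ℝ}
    (hK : ∀ z ∈ s, ‖fderiv ℝ F z - fderiv ℝ F x‖ ≤ K) {w : ι → ℝ} {v : ι → E}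
    (hw₀ : ∀ i, 0 ≤ w i) (hw₁ : ∑ i, w i = 1) (hwv : ∑ i, w i • v i = x)
    (hv : ∀ i, v i ∈ s) (hr : ∀ i, ‖v i - x‖ ≤ r) :
    |∑ i, w i * F (v i) - F x| ≤ K * r := by
  set L := fderiv ℝ F x
  have hK₀ : 0 ≤ K := (norm_nonneg _).trans (hK x hx)
  -- The linear term averages out because `x` is the barycentre of the `v i`.
  have hlinear : ∑ i, w i * L (v i - x) = 0 := by
    calc ∑ i, w i * L (v i - x) = L (∑ i, w i • (v i - x)) := by simp [map_sum]
      _ = 0 := by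
        simp only [smul_sub, sum_sub_distrib, hwv, ← sum_smul, hw₁, one_smul, sub_self, map_zero]
  have htaylor : ∀ i, |F (v i) - F x - L (v i - x)| ≤ K * r := fun i =>
    (hs.norm_image_sub_le_of_norm_fderiv_le' hF hK hx (hv i)).trans
      (mul_le_mul_of_nonneg_left (hr i) hK₀)
  calc |∑ i, w i * F (v i) - F x|
      = |∑ i, w i * (F (v i) - F x - L (v i - x))| := by
        simp only [mul_sub, sum_sub_distrib, hlinear, ← sum_mul, hw₁]
        ring_nf
    _ ≤ ∑ i, |w i * (F (v i) - F x - L (v i - x))| := abs_sum_le_sum_abs _ _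
    _ ≤ ∑ i, w i * (K * r) := by
        gcongr with i
        rw [abs_mul, abs_of_nonneg (hw₀ i)]
        exact mul_le_mul_of_nonneg_left (htaylor i) (hw₀ i)
    _ = K * r := by rw [← sum_mul, hw₁, one_mul]

section Cube

variable {d : ℕ} {ℓ : ℝ} {u : Fin d → ℝ}

lemma vertex_mem_Icc (hℓ : 0 ≤ ℓ) (s : Fin d → Bool) :
    vertex d ℓ u s ∈ Set.Icc u (fun j => u j + ℓ) :=
  ⟨fun j => by simp only [vertex]; split <;> linarith,
    fun j => by simp only [vertex]; split <;> linarith⟩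

lemma norm_sub_le_of_mem_Icc (hℓ : 0 ≤ ℓ) {x y : Fin d → ℝ}
    (hx : x ∈ Set.Icc u (fun j => u j + ℓ)) (hy : y ∈ Set.Icc u (fun j => u j + ℓ)) :
    ‖x - y‖ ≤ ℓ := by
  refine (pi_norm_le_iff_of_nonneg hℓ).2 fun j => ?_
  rw [Pi.sub_apply, Real.norm_eq_abs, abs_sub_le_iff]
  constructor <;> linarith [hx.1 j, hx.2 j, hy.1 j, hy.2 j]

lemma sub_div_mem_Icc_zero_one (hℓ : 0 < ℓ) {x : Fin d → ℝ}
    (hx : x ∈ Set.Icc u (fun j => u j + ℓ)) (j : Fin d) : (x j - u j) / ℓ ∈ Set.Icc 0 1 :=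
  ⟨div_nonneg (by linarith [hx.1 j]) hℓ.le, (div_le_one hℓ).2 (by linarith [hx.2 j])⟩

lemma interp_eq_sum_vertexWeight (f : (Fin d → ℝ) → ℝ) (x : Fin d → ℝ) :
    interp d ℓ u f x =
      ∑ s, vertexWeight (fun j => (x j - u j) / ℓ) s * f (vertex d ℓ u s) :=
  sum_congr rfl fun _ _ => mul_comm _ _

lemma interp_vertex (hℓ : ℓ ≠ 0) (f : (Fin d → ℝ) → ℝ) (s : Fin d → Bool) :
    interp d ℓ u f (vertex d ℓ u s) = f (vertex d ℓ u s) := by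
  have hcoord : (fun j => (vertex d ℓ u s j - u j) / ℓ) = fun j => if s j then 1 else 0 := by
    ext j
    simp only [vertex, add_sub_cancel_left]
    split <;> simp [hℓ]
  rw [interp_eq_sum_vertexWeight, hcoord, sum_eq_single s]
  · rw [vertexWeight_ite_one_zero, if_pos rfl, one_mul]
  · intro s' _ hs'
    rw [vertexWeight_ite_one_zero, if_neg hs', zero_mul]
  · exact fun h => absurd (mem_univ s) h

lemma sum_vertexWeight_smul_vertex (hℓ : ℓ ≠ 0) (x : Fin d → ℝ) :
    ∑ s, vertexWeight (fun j => (x j - u j) / ℓ) s • vertex d ℓ u s = x := by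
  ext j
  simp only [Finset.sum_apply, Pi.smul_apply, smul_eq_mul, vertex, mul_add, sum_add_distrib,
    ← sum_mul, sum_vertexWeight, sum_vertexWeight_mul_ite]
  field_simp
  ring

end Cube

theorem stmt9_general (d : ℕ) (c₁ γ₁ ℓ : ℝ) (hc : 0 < c₁)
    (hγ : γ₁ ∈ Set.Ioc (0 : ℝ) 1) (hℓ : ℓ ∈ Set.Ioc (0 : ℝ) 1)
    (u : Fin d → ℝ)
    (f : (Fin d → ℝ) → ℝ)
    (hf : GradHolderOn d c₁ γ₁ (Set.Icc u (fun j => u j + ℓ)) f) :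
    (∀ s : Fin d → Bool, interp d ℓ u f (vertex d ℓ u s) = f (vertex d ℓ u s)) ∧
    ∀ x ∈ Set.Icc u (fun j => u j + ℓ),
      |interp d ℓ u f x - f x| ≤ c₁ * d * ℓ ^ (1 + γ₁) := by
  obtain ⟨F, hF, hfF, hH⟩ := hf
  have hvert := vertex_mem_Icc (d := d) (u := u) hℓ.1.le
  refine ⟨interp_vertex hℓ.1.ne' f, fun x hx => ?_⟩
  have hK : ∀ z ∈ Set.Icc u (fun j => u j + ℓ),
      ‖fderiv ℝ F z - fderiv ℝ F x‖ ≤ d * (c₁ * ℓ ^ γ₁) := fun z hz => by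
    refine (norm_fderiv_sub_fderiv_le d F z x).trans ?_
    gcongr
    refine (hH z hz x hx).trans ?_
    gcongr
    exacts [hγ.1.le, norm_sub_le_of_mem_Icc hℓ.1.le hz hx]
  have hbound := (convex_Icc _ _).abs_sum_mul_sub_le_of_norm_fderiv_sub_le
    (fun z _ => hF.differentiable one_ne_zero z) hx hK
    (vertexWeight_nonneg (sub_div_mem_Icc_zero_one hℓ.1 hx)) (sum_vertexWeight _)
    (sum_vertexWeight_smul_vertex hℓ.1.ne' x) hvert
    (fun s => norm_sub_le_of_mem_Icc hℓ.1.le (hvert s) hx)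
  rw [interp_eq_sum_vertexWeight, hfF hx]
  simp only [hfF (hvert _)]
  calc _ ≤ d * (c₁ * ℓ ^ γ₁) * ℓ := hbound
    _ = c₁ * d * ℓ ^ (1 + γ₁) := by rw [Real.rpow_add hℓ.1, Real.rpow_one]; ring

/-- The multilinear interpolation of a `(c₁,γ₁)`-gradient-Hölder function at
the vertices of a hypercube of side `ℓ` interpolates `f` at all vertices and is uniformly
`c₁ d ℓ^{1+γ₁}`-close to `f` on the hypercube. -/
theorem stmt9 (d : ℕ) (hd : 1 ≤ d) (c₁ γ₁ ℓ : ℝ) (hc : 0 < c₁)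
    (hγ : γ₁ ∈ Set.Ioc (0 : ℝ) 1) (hℓ : ℓ ∈ Set.Ioc (0 : ℝ) 1)
    (u : Fin d → ℝ) (hu : ∀ j, 0 ≤ u j ∧ u j ≤ 1 - ℓ)
    (f : (Fin d → ℝ) → ℝ)
    (hf : GradHolderOn d c₁ γ₁ (Set.Icc u (fun j => u j + ℓ)) f) :
    (∀ s : Fin d → Bool, interp d ℓ u f (vertex d ℓ u s) = f (vertex d ℓ u s)) ∧
    ∀ x ∈ Set.Icc u (fun j => u j + ℓ),
      |interp d ℓ u f x - f x| ≤ c₁ * d * ℓ ^ (1 + γ₁) :=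
  stmt9_general d c₁ γ₁ ℓ hc hγ hℓ u f hf
end
end

section
/- Let d ≥ 1, c₁ > 0, γ₁ ∈ (0,1], ε > 0, and set η := (132εd·2^{1−γ₁}/c₁)^{1/(1+γ₁)}; assume η ≤ 1/4. Then for every z ∈ ℝ^d, the restriction of the bump function f_{2ε,η,z} to [0,1]^d is (c₁,γ₁)-gradient-Hölder; in particular, f_{2ε,η,z} is continuously differentiable on ℝ^d and ‖∇f_{2ε,η,z}(x) − ∇f_{2ε,η,z}(y)‖_∞ ≤ c₁‖x − y‖_∞^{γ₁} for all x, y ∈ [0,1]^d. -/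
noncomputable section

/-!
On `(-1, 1)` the profile `f̃` equals `exp (1 - u)` with `u = (1 - x²)⁻¹ ≥ 1`, and its first two
derivatives are `exp (1 - u)` times polynomials in `x` and `u`. The elementary bound
`uⁿ e^{-u} ≤ (n / e)ⁿ` turns these into `|f̃'| ≤ 3` and `|f̃''| ≤ 54`; by continuity the bounds
persist at `x = ±1`, where the formulas break down.

A partial derivative of `f = f_{2ε,η,z}` is `2ε/η` times `f̃'` in one coordinate and a product of
values of `f̃ ∈ [0, 1]` in the others. Hence every gradient difference is at most `12ε/η`, and the
gradient is Lipschitz in the sup-norm with constant `2ε(54 + 9d)/η² ≤ 132εd/η²`. Interpolating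
between the two bounds at the scale `‖x - y‖ = 2η` gives the `(c₁, γ₁)`-Hölder bound, because `η`
is chosen so that `c₁ (2η)^γ₁ = 264εd/η`.
-/

open Real Set Filter Topology

lemma pow_mul_exp_neg_le (n : ℕ) {u : ℝ} (hu : 0 ≤ u) : u ^ n * exp (-u) ≤ (n / exp 1) ^ n := by
  rcases Nat.eq_zero_or_pos n with rfl | hn
  · simpa using hu
  have hn' : (0 : ℝ) < n := Nat.cast_pos.2 hn
  -- `y ≤ exp (y - 1)` at `y = u / n`, then raise to the `n`-th power
  have h : u * exp (-(u / n)) ≤ n / exp 1 := by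
    have := add_one_le_exp (u / n - 1)
    rw [exp_sub, sub_add_cancel, le_div_iff₀ (exp_pos 1)] at this
    rw [exp_neg, ← div_eq_mul_inv, div_le_div_iff₀ (exp_pos _) (exp_pos 1)]
    calc u * exp 1 = n * (u / n * exp 1) := by field_simp
      _ ≤ n * exp (u / n) := mul_le_mul_of_nonneg_left this hn'.le
  calc u ^ n * exp (-u) = (u * exp (-(u / n))) ^ n := by
        rw [mul_pow, ← exp_nat_mul]; field_simp
    _ ≤ (n / exp 1) ^ n := pow_le_pow_left₀ (by positivity) h n

lemma le_mul_rpow_of_le_mul_of_le {D L M c r t γ : ℝ} (hγ0 : 0 ≤ γ) (hγ1 : γ ≤ 1) (hc : 0 ≤ c)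
    (hr : 0 < r) (ht : 0 ≤ t) (hDL : D ≤ L * t) (hDM : D ≤ M) (hLr : L * r ≤ c * r ^ γ)
    (hMr : M ≤ c * r ^ γ) : D ≤ c * t ^ γ := by
  rcases le_total t r with htr | hrt
  · have hq : t / r ≤ (t / r) ^ γ :=
      self_le_rpow_of_le_one (div_nonneg ht hr.le) ((div_le_one hr).2 htr) hγ1
    calc D ≤ L * r * (t / r) := by rwa [mul_assoc, mul_div_cancel₀ _ hr.ne']
      _ ≤ c * r ^ γ * (t / r) ^ γ := by gcongr
      _ = c * t ^ γ := by rw [div_rpow ht hr.le, mul_assoc, mul_div_cancel₀ _ (by positivity)]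
  · calc D ≤ c * r ^ γ := hDM.trans hMr
      _ ≤ c * t ^ γ := by gcongr

lemma abs_le_of_forall_notMem_finite {h : ℝ → ℝ} (hh : Continuous h) {s : Set ℝ} (hs : s.Finite)
    {C : ℝ} (hC : ∀ x ∉ s, |h x| ≤ C) (x : ℝ) : |h x| ≤ C := by
  have hdense : Dense sᶜ := by simpa [compl_eq_univ_sdiff] using dense_univ.sdiff_finite hs
  exact (isClosed_le hh.abs continuous_const).closure_subset_iff.2 hC
    (hdense.closure_eq ▸ mem_univ x)

lemma abs_le_of_forall_sq_ne_one {h : ℝ → ℝ} (hh : Continuous h) {C : ℝ}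
    (hlt : ∀ x : ℝ, x ^ 2 < 1 → |h x| ≤ C) (hgt : ∀ x : ℝ, 1 < x ^ 2 → |h x| ≤ C) (x : ℝ) :
    |h x| ≤ C := by
  refine abs_le_of_forall_notMem_finite hh (toFinite {1, -1}) (fun y hy => ?_) x
  rcases (sq_ne_one_iff.2 (by simpa [not_or] using hy)).lt_or_gt with h | h
  exacts [hlt y h, hgt y h]

lemma abs_sub_le_of_abs_deriv_le {f : ℝ → ℝ} (hf : Differentiable ℝ f) {C : ℝ}
    (hC : ∀ x, |deriv f x| ≤ C) (a b : ℝ) : |f a - f b| ≤ C * |a - b| := by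
  simpa only [Real.norm_eq_abs] using
    convex_univ.norm_image_sub_le_of_norm_deriv_le (fun x _ => hf x) (fun x _ => hC x)
      (mem_univ b) (mem_univ a)

lemma hasDerivAt_inv_one_sub_sq {x : ℝ} (hx : x ^ 2 ≠ 1) :
    HasDerivAt (fun y : ℝ => (1 - y ^ 2)⁻¹) (2 * x * (1 - x ^ 2)⁻¹ ^ 2) x := by
  refine (((hasDerivAt_pow 2 x).const_sub 1).inv (sub_ne_zero.2 hx.symm)).congr_deriv ?_
  field_simp
  ring

lemma abs_prod_sub_prod_le_sum {ι : Type*} (s : Finset ι) {a b : ι → ℝ}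
    (ha : ∀ i ∈ s, |a i| ≤ 1) (hb : ∀ i ∈ s, |b i| ≤ 1) :
    |∏ i ∈ s, a i - ∏ i ∈ s, b i| ≤ ∑ i ∈ s, |a i - b i| := by
  induction s using Finset.cons_induction with
  | empty => simp
  | cons i s hi ih =>
    simp only [Finset.mem_cons, forall_eq_or_imp] at ha hb
    rw [Finset.prod_cons, Finset.prod_cons, Finset.sum_cons]
    have hprod : |∏ k ∈ s, a k| ≤ 1 := by
      rw [Finset.abs_prod]; exact Finset.prod_le_one (fun _ _ => abs_nonneg _) ha.2
    calc |a i * ∏ k ∈ s, a k - b i * ∏ k ∈ s, b k|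
        = |(a i - b i) * ∏ k ∈ s, a k + b i * (∏ k ∈ s, a k - ∏ k ∈ s, b k)| := by ring_nf
      _ ≤ |a i - b i| * |∏ k ∈ s, a k| + |b i| * |∏ k ∈ s, a k - ∏ k ∈ s, b k| := by
        rw [← abs_mul, ← abs_mul]; exact abs_add_le _ _
      _ ≤ |a i - b i| * 1 + 1 * ∑ k ∈ s, |a k - b k| := by
        gcongr
        exacts [hb.1, ih ha.2 hb.2]
      _ = |a i - b i| + ∑ k ∈ s, |a k - b k| := by ring

lemma fderiv_prod_comp_apply_single {ι : Type*} [Fintype ι] [DecidableEq ι] {g : ι → ℝ → ℝ}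
    (hg : ∀ i, Differentiable ℝ (g i)) (x : ι → ℝ) (j : ι) :
    fderiv ℝ (fun x : ι → ℝ => ∏ i, g i (x i)) x (Pi.single j 1) =
      (∏ i ∈ Finset.univ.erase j, g i (x i)) * deriv (g j) (x j) := by
  have hfactor : ∀ i ∈ (Finset.univ : Finset ι), HasFDerivAt (fun x : ι → ℝ => g i (x i))
      (deriv (g i) (x i) • ContinuousLinearMap.proj i) x :=
    fun i _ => (hg i (x i)).hasDerivAt.comp_hasFDerivAt x
      (ContinuousLinearMap.proj (R := ℝ) (φ := fun _ : ι => ℝ) i).hasFDerivAt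
  rw [(HasFDerivAt.finsetProd hfactor).fderiv]
  simp [Pi.single_apply]

lemma mem_Ioo_neg_one_one_iff_sq_lt_one {x : ℝ} : x ∈ Ioo (-1 : ℝ) 1 ↔ x ^ 2 < 1 := by
  rw [sq_lt_one_iff_abs_lt_one, abs_lt, mem_Ioo]

lemma bump1_eq_exp_one_mul_expNegInvGlue (x : ℝ) :
    bump1 x = exp 1 * expNegInvGlue (1 - x ^ 2) := by
  by_cases hx : x ^ 2 < 1
  · have hs : 0 < 1 - x ^ 2 := by linarith
    rw [bump1, if_pos (mem_Ioo_neg_one_one_iff_sq_lt_one.2 hx), expNegInvGlue,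
      if_neg hs.not_ge, ← exp_add]
    congr 1
    field_simp
    ring
  · rw [bump1, if_neg (mem_Ioo_neg_one_one_iff_sq_lt_one.not.2 hx),
      expNegInvGlue.zero_of_nonpos (by linarith), mul_zero]

lemma contDiff_bump1 {n : ℕ∞} : ContDiff ℝ n bump1 := by
  rw [funext bump1_eq_exp_one_mul_expNegInvGlue]
  exact contDiff_const.mul (expNegInvGlue.contDiff.comp (contDiff_const.sub (contDiff_id.pow 2)))

lemma bump1_nonneg (x : ℝ) : 0 ≤ bump1 x := by
  unfold bump1; split_ifs <;> positivity

lemma bump1_le_one (x : ℝ) : bump1 x ≤ 1 := by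
  unfold bump1
  split_ifs with hx
  · rw [exp_le_one_iff]
    exact div_nonpos_of_nonpos_of_nonneg (by nlinarith) (by nlinarith [hx.1, hx.2])
  · exact zero_le_one

lemma abs_bump1_le_one (x : ℝ) : |bump1 x| ≤ 1 :=
  abs_le.2 ⟨by linarith [bump1_nonneg x], bump1_le_one x⟩

@[fun_prop]
lemma differentiable_bump1 : Differentiable ℝ bump1 :=
  (contDiff_bump1 (n := 1)).differentiable one_ne_zero

lemma bump1_eventuallyEq_exp {x : ℝ} (hx : x ^ 2 < 1) :
    bump1 =ᶠ[𝓝 x] fun y => exp (1 - (1 - y ^ 2)⁻¹) := by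
  filter_upwards [(isOpen_lt (continuous_pow 2) continuous_const).mem_nhds hx] with y hy
  rw [bump1_eq_exp_one_mul_expNegInvGlue, expNegInvGlue, if_neg (by simpa using hy), ← exp_add,
    ← sub_eq_add_neg]

lemma hasDerivAt_bump1 {x : ℝ} (hx : x ^ 2 < 1) :
    HasDerivAt bump1 (-(2 * x) * (1 - x ^ 2)⁻¹ ^ 2 * exp (1 - (1 - x ^ 2)⁻¹)) x :=
  (((hasDerivAt_inv_one_sub_sq hx.ne).const_sub 1).exp.congr_deriv (by ring)).congr_of_eventuallyEq
    (bump1_eventuallyEq_exp hx)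

lemma hasDerivAt_deriv_bump1 {x : ℝ} (hx : x ^ 2 < 1) :
    HasDerivAt (deriv bump1)
      ((4 * x ^ 2 * (1 - x ^ 2)⁻¹ ^ 4 - 2 * (1 - x ^ 2)⁻¹ ^ 2 - 8 * x ^ 2 * (1 - x ^ 2)⁻¹ ^ 3) *
        exp (1 - (1 - x ^ 2)⁻¹)) x := by
  have hderiv : deriv bump1 =ᶠ[𝓝 x]
      fun y => -(2 * y) * (1 - y ^ 2)⁻¹ ^ 2 * exp (1 - (1 - y ^ 2)⁻¹) := by
    filter_upwards [(isOpen_lt (continuous_pow 2) continuous_const).mem_nhds hx] with y hy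
    exact (hasDerivAt_bump1 hy).deriv
  have hu := hasDerivAt_inv_one_sub_sq hx.ne
  refine HasDerivAt.congr_of_eventuallyEq ?_ hderiv
  refine ((((hasDerivAt_id x).const_mul 2).neg.mul (hu.pow 2)).mul
    (hu.const_sub 1).exp).congr_deriv ?_
  simp only [id, Pi.pow_apply, Pi.neg_apply, Pi.mul_apply]
  ring

lemma deriv_bump1_eventuallyEq_zero {x : ℝ} (hx : 1 < x ^ 2) : deriv bump1 =ᶠ[𝓝 x] 0 := by
  have h : bump1 =ᶠ[𝓝 x] 0 := by
    filter_upwards [(isOpen_lt continuous_const (continuous_pow 2)).mem_nhds hx] with y hy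
    have hy : (1 : ℝ) < y ^ 2 := hy
    rw [bump1_eq_exp_one_mul_expNegInvGlue, expNegInvGlue.zero_of_nonpos (by linarith),
      mul_zero, Pi.zero_apply]
  simpa using h.deriv

lemma contDiff_deriv_bump1 : ContDiff ℝ 1 (deriv bump1) := (contDiff_bump1 (n := 2)).deriv'

lemma abs_deriv_bump1_le (x : ℝ) : |deriv bump1 x| ≤ 3 := by
  refine abs_le_of_forall_sq_ne_one contDiff_deriv_bump1.continuous
    (fun y hy => ?_) (fun y hy => by simp [(deriv_bump1_eventuallyEq_zero hy).eq_of_nhds]) x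
  set u := (1 - y ^ 2)⁻¹
  have hu : 0 ≤ u := inv_nonneg.2 (by linarith)
  have he := exp_one_gt_d9
  have hP : u ^ 2 * exp (-u) * exp 1 ≤ 3 / 2 := by
    have := pow_mul_exp_neg_le 2 hu
    rw [div_pow, le_div_iff₀ (by positivity), Nat.cast_ofNat] at this
    nlinarith [mul_nonneg (mul_nonneg (pow_nonneg hu 2) (exp_pos (-u)).le) (exp_pos 1).le]
  have hD : deriv bump1 y = -(2 * y) * u ^ 2 * (exp (-u) * exp 1) := by
    rw [(hasDerivAt_bump1 hy).deriv, ← exp_add, neg_add_eq_sub]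
  calc |deriv bump1 y| = 2 * |y| * (u ^ 2 * exp (-u) * exp 1) := by
        simp only [hD, abs_mul, abs_neg, abs_two, abs_pow, abs_of_nonneg hu, abs_exp]
        ring
    _ ≤ 2 * 1 * (3 / 2) := by gcongr; exact ((sq_lt_one_iff_abs_lt_one y).1 hy).le
    _ = 3 := by norm_num

lemma abs_deriv_deriv_bump1_le (x : ℝ) : |deriv (deriv bump1) x| ≤ 54 := by
  refine abs_le_of_forall_sq_ne_one (contDiff_deriv_bump1.continuous_deriv le_rfl)
    (fun y hy => ?_) (fun y hy => by simp [(deriv_bump1_eventuallyEq_zero hy).deriv.eq_of_nhds]) x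
  set u := (1 - y ^ 2)⁻¹
  have hu : 1 ≤ u := one_le_inv₀ (by linarith) |>.2 (by nlinarith)
  have hu3 : 0 ≤ u ^ 3 := by positivity
  have hpoly : |4 * y ^ 2 * u ^ 4 - 2 * u ^ 2 - 8 * y ^ 2 * u ^ 3| ≤ 2 * u ^ 2 + 4 * u ^ 4 := by
    have hx0 := sq_nonneg y
    rw [abs_le]
    constructor
    · nlinarith [mul_nonneg hu3 (show 0 ≤ u * (1 + y ^ 2) - 2 * y ^ 2 by nlinarith)]
    · nlinarith [mul_nonneg (mul_nonneg hu3 (zero_le_one.trans hu)) (sub_nonneg.2 hy.le),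
        mul_nonneg hx0 hu3]
  have he := exp_one_gt_d9
  have hP2 := pow_mul_exp_neg_le 2 (zero_le_one.trans hu)
  have hP4 := pow_mul_exp_neg_le 4 (zero_le_one.trans hu)
  have hD : deriv (deriv bump1) y =
      (4 * y ^ 2 * u ^ 4 - 2 * u ^ 2 - 8 * y ^ 2 * u ^ 3) * (exp (-u) * exp 1) := by
    rw [(hasDerivAt_deriv_bump1 hy).deriv, ← exp_add, neg_add_eq_sub]
  -- `8 / e + 1024 / e ^ 3 ≈ 53.9`
  have hnum : (2 * 2 ^ 2 * exp 1 ^ 2 + 4 * 4 ^ 4) / exp 1 ^ 3 ≤ 54 := by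
    rw [div_le_iff₀ (by positivity)]
    nlinarith [exp_pos 1]
  calc |deriv (deriv bump1) y|
      ≤ (2 * u ^ 2 + 4 * u ^ 4) * (exp (-u) * exp 1) := by
        rw [hD, abs_mul, abs_of_pos (mul_pos (exp_pos (-u)) (exp_pos 1))]
        gcongr
    _ = (2 * (u ^ 2 * exp (-u)) + 4 * (u ^ 4 * exp (-u))) * exp 1 := by ring
    _ ≤ (2 * (2 / exp 1) ^ 2 + 4 * (4 / exp 1) ^ 4) * exp 1 := by push_cast at hP2 hP4; gcongr
    _ = (2 * 2 ^ 2 * exp 1 ^ 2 + 4 * 4 ^ 4) / exp 1 ^ 3 := by field_simp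
    _ ≤ 54 := hnum

section Bump

variable {d : ℕ} {α η : ℝ} (z : Fin d → ℝ)

lemma hasDerivAt_bump1_sub_div (c t : ℝ) :
    HasDerivAt (fun t => bump1 ((t - c) / η)) (deriv bump1 ((t - c) / η) / η) t :=
  ((differentiable_bump1 _).hasDerivAt.comp t
    (((hasDerivAt_id' t).sub_const c).div_const η)).congr_deriv (by ring)

lemma contDiff_bump : ContDiff ℝ 1 (bump d α η z) :=
  contDiff_const.mul <| contDiff_prod fun k _ =>
    contDiff_bump1.comp (((contDiff_apply ℝ ℝ k).sub contDiff_const).div_const η)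

lemma gradVec_bump (x : Fin d → ℝ) (j : Fin d) :
    gradVec d (bump d α η z) x j = α / η *
      ((∏ k ∈ Finset.univ.erase j, bump1 ((x k - z k) / η)) * deriv bump1 ((x j - z j) / η)) := by
  have hfactor : ∀ k, Differentiable ℝ fun t => bump1 ((t - z k) / η) :=
    fun k t => (hasDerivAt_bump1_sub_div (z k) t).differentiableAt
  have hprod : Differentiable ℝ fun x : Fin d → ℝ => ∏ k, bump1 ((x k - z k) / η) := by
    fun_prop
  show fderiv ℝ (fun x => α * ∏ k, bump1 ((x k - z k) / η)) x (Pi.single j 1) = _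
  rw [fderiv_const_mul (hprod x), smul_apply, fderiv_prod_comp_apply_single hfactor,
    (hasDerivAt_bump1_sub_div (z j) (x j)).deriv, smul_eq_mul]
  ring

lemma abs_sub_div_sub_sub_div_le (hη : 0 < η) (x y : Fin d → ℝ) (k : Fin d) :
    |(x k - z k) / η - (y k - z k) / η| ≤ ‖x - y‖ / η := by
  rw [← sub_div, sub_sub_sub_cancel_right, abs_div, abs_of_pos hη]
  gcongr
  exact norm_le_pi_norm (x - y) k

lemma abs_bump1_sub_div_sub_le (hη : 0 < η) (x y : Fin d → ℝ) (k : Fin d) :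
    |bump1 ((x k - z k) / η) - bump1 ((y k - z k) / η)| ≤ 3 * (‖x - y‖ / η) :=
  (abs_sub_le_of_abs_deriv_le differentiable_bump1 abs_deriv_bump1_le _ _).trans
    (by gcongr; exact abs_sub_div_sub_sub_div_le z hη x y k)

lemma abs_deriv_bump1_sub_div_sub_le (hη : 0 < η) (x y : Fin d → ℝ) (k : Fin d) :
    |deriv bump1 ((x k - z k) / η) - deriv bump1 ((y k - z k) / η)| ≤ 54 * (‖x - y‖ / η) :=
  (abs_sub_le_of_abs_deriv_le contDiff_deriv_bump1.differentiable_one abs_deriv_deriv_bump1_le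
    _ _).trans (by gcongr; exact abs_sub_div_sub_sub_div_le z hη x y k)

lemma abs_prod_bump1_le_one (s : Finset (Fin d)) (x : Fin d → ℝ) :
    |∏ k ∈ s, bump1 ((x k - z k) / η)| ≤ 1 := by
  rw [Finset.abs_prod]
  exact Finset.prod_le_one (fun _ _ => abs_nonneg _) fun _ _ => abs_bump1_le_one _

lemma norm_gradVec_bump_le (hα : 0 ≤ α) (hη : 0 < η) (x : Fin d → ℝ) :
    ‖gradVec d (bump d α η z) x‖ ≤ 3 * α / η := by
  refine (pi_norm_le_iff_of_nonneg (by positivity)).2 fun j => ?_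
  rw [Real.norm_eq_abs, gradVec_bump, abs_mul, abs_mul, abs_of_nonneg (by positivity : 0 ≤ α / η)]
  calc α / η * (|∏ k ∈ Finset.univ.erase j, bump1 ((x k - z k) / η)| *
        |deriv bump1 ((x j - z j) / η)|)
      ≤ α / η * (1 * 3) := by
        gcongr
        exacts [abs_prod_bump1_le_one z _ x, abs_deriv_bump1_le _]
    _ = 3 * α / η := by ring

lemma norm_gradVec_bump_sub_le (hα : 0 ≤ α) (hη : 0 < η) (x y : Fin d → ℝ) :
    ‖gradVec d (bump d α η z) x - gradVec d (bump d α η z) y‖ ≤ 6 * α / η :=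
  calc _ ≤ 3 * α / η + 3 * α / η :=
        (norm_sub_le _ _).trans
          (add_le_add (norm_gradVec_bump_le z hα hη x) (norm_gradVec_bump_le z hα hη y))
    _ = 6 * α / η := by ring

lemma norm_gradVec_bump_sub_le_mul (hα : 0 ≤ α) (hη : 0 < η) (x y : Fin d → ℝ) :
    ‖gradVec d (bump d α η z) x - gradVec d (bump d α η z) y‖ ≤
      α * (54 + 9 * d) / η ^ 2 * ‖x - y‖ := by
  refine (pi_norm_le_iff_of_nonneg (by positivity)).2 fun j => ?_
  set t := ‖x - y‖
  set P := fun w : Fin d → ℝ => ∏ k ∈ Finset.univ.erase j, bump1 ((w k - z k) / η)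
  set A := fun w : Fin d → ℝ => deriv bump1 ((w j - z j) / η)
  have hP : |P x - P y| ≤ d * (3 * (t / η)) :=
    calc |P x - P y|
        ≤ ∑ k ∈ Finset.univ.erase j, |bump1 ((x k - z k) / η) - bump1 ((y k - z k) / η)| :=
          abs_prod_sub_prod_le_sum _ (fun _ _ => abs_bump1_le_one _)
            (fun _ _ => abs_bump1_le_one _)
      _ ≤ ∑ k ∈ Finset.univ.erase j, 3 * (t / η) :=
          Finset.sum_le_sum fun k _ => abs_bump1_sub_div_sub_le z hη x y k
      _ ≤ d * (3 * (t / η)) := by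
          rw [Finset.sum_const, nsmul_eq_mul]
          gcongr
          exact_mod_cast Finset.card_erase_le.trans_eq (Finset.card_fin d)
  rw [Pi.sub_apply, Real.norm_eq_abs, gradVec_bump, gradVec_bump]
  calc |α / η * (P x * A x) - α / η * (P y * A y)|
      = α / η * |P x * (A x - A y) + (P x - P y) * A y| := by
        rw [← mul_sub, abs_mul, abs_of_nonneg (by positivity : 0 ≤ α / η)]; ring_nf
    _ ≤ α / η * (1 * (54 * (t / η)) + d * (3 * (t / η)) * 3) := by
        gcongr
        refine (abs_add_le _ _).trans ?_
        rw [abs_mul, abs_mul]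
        gcongr
        exacts [abs_prod_bump1_le_one z _ x, abs_deriv_bump1_sub_div_sub_le z hη x y j,
          abs_deriv_bump1_le _]
    _ = α * (54 + 9 * d) / η ^ 2 * t := by field_simp; ring

end Bump

lemma mul_two_mul_rpow_mul_eq {c γ K η : ℝ} (hc : 0 < c) (hγ : 0 < 1 + γ) (hK : 0 ≤ K)
    (hη : η = (K * 2 ^ (1 - γ) / c) ^ (1 / (1 + γ))) : c * (2 * η) ^ γ * η = 2 * K := by
  have hB : 0 ≤ K * 2 ^ (1 - γ) / c := by positivity
  have hη0 : 0 ≤ η := hη ▸ rpow_nonneg hB _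
  have hpow : η ^ (1 + γ) = K * 2 ^ (1 - γ) / c := by
    rw [hη, ← rpow_mul hB, one_div_mul_cancel hγ.ne', rpow_one]
  calc c * (2 * η) ^ γ * η = c * 2 ^ γ * η ^ (1 + γ) := by
        rw [mul_rpow zero_le_two hη0, rpow_add' hη0 hγ.ne', rpow_one]; ring
    _ = K * (2 ^ γ * 2 ^ (1 - γ)) := by rw [hpow]; field_simp
    _ = 2 * K := by rw [← rpow_add zero_lt_two]; norm_num; ring

theorem stmt12_general (d : ℕ) (hd : 1 ≤ d) (c₁ γ₁ ε η : ℝ) (hc : 0 < c₁)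
    (hγ : γ₁ ∈ Set.Ioc (0 : ℝ) 1) (hε : 0 < ε)
    (hη : η = (132 * ε * (d : ℝ) * (2 : ℝ) ^ (1 - γ₁) / c₁) ^ (1 / (1 + γ₁))) :
    ∀ z : Fin d → ℝ,
      GradHolderOn d c₁ γ₁ (unitCube d) (bump d (2 * ε) η z) ∧
      ContDiff ℝ 1 (bump d (2 * ε) η z) ∧
      ∀ x ∈ unitCube d, ∀ y ∈ unitCube d,
        ‖gradVec d (bump d (2 * ε) η z) x - gradVec d (bump d (2 * ε) η z) y‖
          ≤ c₁ * ‖x - y‖ ^ γ₁ := by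
  intro z
  have hd' : (1 : ℝ) ≤ d := Nat.one_le_cast.2 hd
  have hηpos : 0 < η := hη ▸ rpow_pos_of_pos (by positivity) _
  have hscale : c₁ * (2 * η) ^ γ₁ = 2 * (132 * ε * d) / η :=
    eq_div_of_mul_eq hηpos.ne' (mul_two_mul_rpow_mul_eq hc (by linarith [hγ.1]) (by positivity) hη)
  have hholder (x y : Fin d → ℝ) :
      ‖gradVec d (bump d (2 * ε) η z) x - gradVec d (bump d (2 * ε) η z) y‖ ≤
        c₁ * ‖x - y‖ ^ γ₁ := by
    refine le_mul_rpow_of_le_mul_of_le hγ.1.le hγ.2 hc.le (by positivity : (0 : ℝ) < 2 * η)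
      (norm_nonneg _) (norm_gradVec_bump_sub_le_mul z (by positivity) hηpos x y)
      (norm_gradVec_bump_sub_le z (by positivity) hηpos x y) ?_ ?_ <;> rw [hscale]
    · field_simp
      nlinarith
    · exact div_le_div_of_nonneg_right (by nlinarith) hηpos.le
  exact ⟨⟨_, contDiff_bump z, fun _ _ => rfl, fun x _ y _ => hholder x y⟩, contDiff_bump z,
    fun x _ y _ => hholder x y⟩

/-- With `η = (132εd·2^{1-γ₁}/c₁)^{1/(1+γ₁)} ≤ 1/4`, for every `z ∈ ℝ^d`
the restriction of `f_{2ε,η,z}` to `[0,1]^d` is `(c₁,γ₁)`-gradient-Hölder; in particular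
`f_{2ε,η,z}` is continuously differentiable on `ℝ^d` and its gradient satisfies the
`(c₁,γ₁)`-Hölder bound (in sup-norm) on `[0,1]^d`. -/
theorem stmt12 (d : ℕ) (hd : 1 ≤ d) (c₁ γ₁ ε η : ℝ) (hc : 0 < c₁)
    (hγ : γ₁ ∈ Set.Ioc (0 : ℝ) 1) (hε : 0 < ε)
    (hη : η = (132 * ε * (d : ℝ) * (2 : ℝ) ^ (1 - γ₁) / c₁) ^ (1 / (1 + γ₁)))
    (hη4 : η ≤ 1 / 4) :
    ∀ z : Fin d → ℝ,
      GradHolderOn d c₁ γ₁ (unitCube d) (bump d (2 * ε) η z) ∧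
      ContDiff ℝ 1 (bump d (2 * ε) η z) ∧
      ∀ x ∈ unitCube d, ∀ y ∈ unitCube d,
        ‖gradVec d (bump d (2 * ε) η z) x - gradVec d (bump d (2 * ε) η z) y‖
          ≤ c₁ * ‖x - y‖ ^ γ₁ :=
  stmt12_general d hd c₁ γ₁ ε η hc hγ hε hη
end
end

section
/- Let d ≥ 1, a ∈ ℝ, c > 0, γ ∈ (0,1], and let f : [0,1]^d → ℝ be a convex (c,γ)-Hölder function whose level set {f = a} is Δ-proper for some Δ > 0. Then there exists a constant C* > 0 such that for every r ∈ (0,1), the packing number satisfies N({x ∈ [0,1]^d : |f(x) − a| ≤ r}, r) ≤ C*·(1/r)^{d−1}. -/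
/-!
Pick `x₀` with `f x₀ ≤ a - Δ`. Hölder continuity keeps `f < a` on a ball around `x₀`, so by the
boundary condition this ball stays inside the cube. Write points of the shell `{|f - a| ≤ r}` in
polar form `x₀ + t u` with `‖u‖ = 1`. The sublevel set `{f ≤ a + r}` is convex and contains that
ball, so if two shell points have `r`-close directions, a slightly shrunk copy of one can be moved
onto the ray of the other while staying in `{f ≤ a + r}`; convexity of `f` along that ray, which starts
`Δ` below the level, then forces the two radii to be `O(r)`-close. Hence shell points with
`r`-close directions are `O(r)`-close. The unit sup-sphere splits into `O(r^{1-d})` cells of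
size `r`, and an `r`-separated set of diameter `O(r)` has `O(1)` points.
-/

noncomputable section

/-- The level set `{f = a}` is `Δ`-proper: it is nonempty, `min f + Δ ≤ a`, and
`a ≤ min_{∂[0,1]^d} f`. -/
def ProperLevelSet (d : ℕ) (f : (Fin d → ℝ) → ℝ) (a Δ : ℝ) : Prop :=
  (∃ x ∈ unitCube d, f x = a) ∧ (∃ x ∈ unitCube d, f x + Δ ≤ a) ∧
  ∀ x ∈ frontier (unitCube d), a ≤ f x

open Metric

theorem IsPreconnected.subset_of_disjoint_frontier {X : Type*} [TopologicalSpace X]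
    {s t : Set X} (ht : IsPreconnected t) (hts : (t ∩ s).Nonempty)
    (hfr : Disjoint t (frontier s)) : t ⊆ s := by
  refine (ht.subset_of_closure_inter_subset isOpen_interior ?_ ?_).trans interior_subset
  · obtain ⟨x, hxt, hxs⟩ := hts
    exact ⟨x, hxt, self_sdiff_frontier s ▸ ⟨hxs, hfr.notMem_of_mem_left hxt⟩⟩
  · rintro y ⟨hy, hyt⟩
    exact closure_sdiff_frontier s ▸
      ⟨closure_mono interior_subset hy, hfr.notMem_of_mem_left hyt⟩

theorem HolderOn.abs_sub_lt {d : ℕ} {c γ ρ : ℝ} {E : Set (Fin d → ℝ)} {f : (Fin d → ℝ) → ℝ}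
    (hf : HolderOn d c γ E f) (hc : 0 < c) (hγ : 0 < γ) {x y : Fin d → ℝ} (hx : x ∈ E)
    (hy : y ∈ E) (hxy : ‖x - y‖ < ρ) : |f x - f y| < c * ρ ^ γ :=
  (hf x hx y hy).trans_lt (by gcongr)

theorem exists_closedBall_subset_sublevel {d : ℕ} {a c γ Δ : ℝ} {E : Set (Fin d → ℝ)}
    {f : (Fin d → ℝ) → ℝ} (hE : IsClosed E) (hf : HolderOn d c γ E f) (hc : 0 < c)
    (hγ : 0 < γ) (hΔ : 0 < Δ) {x₀ : Fin d → ℝ} (hx₀ : x₀ ∈ E) (hx₀a : f x₀ + Δ ≤ a)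
    (hfr : ∀ x ∈ frontier E, a ≤ f x) :
    ∃ ρ > 0, closedBall x₀ ρ ⊆ {x ∈ E | f x ≤ a} := by
  set ρ := (Δ / c) ^ γ⁻¹
  have hρ : 0 < ρ := by positivity
  have hcρ : c * ρ ^ γ = Δ := by
    rw [Real.rpow_inv_rpow (by positivity) hγ.ne']; field_simp
  have hlt : ∀ x ∈ E, x ∈ ball x₀ ρ → f x < a := fun x hx hxρ => by
    have := (abs_lt.mp (hf.abs_sub_lt hc hγ hx hx₀ (mem_ball_iff_norm.mp hxρ))).2
    linarith
  have hball : ball x₀ ρ ⊆ E :=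
    (convex_ball x₀ ρ).isPreconnected.subset_of_disjoint_frontier
      ⟨x₀, mem_ball_self hρ, hx₀⟩ <| Set.disjoint_left.mpr fun x hxρ hx =>
        (hlt x (hE.frontier_subset hx) hxρ).not_ge (hfr x hx)
  refine ⟨ρ / 2, by positivity, fun x hx => ?_⟩
  have hxρ : x ∈ ball x₀ ρ := closedBall_subset_ball (by linarith) hx
  exact ⟨hball hxρ, (hlt x (hball hxρ) hxρ).le⟩

section Convex

variable {E : Type*} [NormedAddCommGroup E] [NormedSpace ℝ E] {S : Set E} {f : E → ℝ} {x₀ : E}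
  {a r Δ ρ : ℝ}

theorem Convex.add_smul_mem_of_closedBall_subset {K : Set E} (hK : Convex ℝ K)
    {p q : E} (hρ : 0 < ρ) (hr : 0 < r) (hball : closedBall x₀ ρ ⊆ K)
    (hp : x₀ + p ∈ K) (hpq : ‖q - p‖ ≤ r) : x₀ + (ρ / (ρ + r)) • q ∈ K := by
  have hb : x₀ + (ρ / r) • (q - p) ∈ K := hball <| by
    rw [mem_closedBall_iff_norm, add_sub_cancel_left, norm_smul,
      Real.norm_of_nonneg (by positivity)]
    calc ρ / r * ‖q - p‖ ≤ ρ / r * r := by gcongr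
      _ = ρ := by field_simp
  -- `x₀ + θ • q` is the convex combination of `x₀ + p` and `x₀ + (ρ / r) • (q - p)` with weight
  -- `θ = ρ / (ρ + r)` on the former.
  have hsum : ρ / (ρ + r) + r / (ρ + r) = 1 := by field_simp
  have hprod : r / (ρ + r) * (ρ / r) = ρ / (ρ + r) := by field_simp
  convert hK hp hb (by positivity) (by positivity) hsum using 1
  linear_combination (norm := module) (-hsum) • x₀ - hprod • (q - p)

theorem ConvexOn.sub_mul_le_of_ray (hf : ConvexOn ℝ S f) {u : E} {s τ : ℝ} (hx₀ : x₀ ∈ S)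
    (hw : x₀ + τ • u ∈ S) (hs : 0 ≤ s) (hsτ : s ≤ τ) (hx₀a : f x₀ + Δ ≤ a)
    (hx : a - r ≤ f (x₀ + s • u)) (hwa : f (x₀ + τ • u) ≤ a + r) :
    (τ - s) * Δ ≤ r * (τ + s) := by
  rcases hsτ.eq_or_lt with rfl | hsτ
  · have : 0 ≤ r := by linarith
    rw [sub_self, zero_mul]
    positivity
  have hτ : 0 < τ := hs.trans_lt hsτ
  set ν := s / τ
  have hν : ν ≤ 1 := (div_le_one hτ).mpr hsτ.le
  have hντ : ν * τ = s := div_mul_cancel₀ s hτ.ne'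
  have hcomb : (1 - ν) • x₀ + ν • (x₀ + τ • u) = x₀ + s • u := by
    linear_combination (norm := module) hντ • u
  have hconv := hf.2 hx₀ hw (sub_nonneg.mpr hν) (by positivity) (sub_add_cancel 1 ν)
  rw [hcomb, smul_eq_mul, smul_eq_mul] at hconv
  have h1 : (1 - ν) * f x₀ ≤ (1 - ν) * (a - Δ) :=
    mul_le_mul_of_nonneg_left (by linarith) (by linarith)
  have h2 : ν * f (x₀ + τ • u) ≤ ν * (a + r) := by gcongr
  have h3 : (1 - ν) * Δ ≤ r * (1 + ν) := by linarith
  calc (τ - s) * Δ = τ * ((1 - ν) * Δ) := by rw [← hντ]; ring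
    _ ≤ τ * (r * (1 + ν)) := by gcongr
    _ = r * (τ + s) := by rw [← hντ]; ring

theorem ConvexOn.radial_gap (hf : ConvexOn ℝ S f) (hx₀ : x₀ ∈ S) (hx₀a : f x₀ + Δ ≤ a)
    (hΔ : 0 < Δ) (hρ : 0 < ρ) (hr : 0 < r) (hball : closedBall x₀ ρ ⊆ {x ∈ S | f x ≤ a})
    {u v : E} {s t : ℝ} (hs : 0 ≤ s) (ht : 0 ≤ t) (ht1 : t ≤ 1) (huv : ‖u - v‖ ≤ r)
    (hx : a - r ≤ f (x₀ + s • u)) (hy : x₀ + t • v ∈ S) (hya : f (x₀ + t • v) ≤ a + r) :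
    t - s ≤ (1 / ρ + 2 / Δ) * r := by
  set θ := ρ / (ρ + r) with hθ
  have hθ1 : θ ≤ 1 := (div_le_one (by positivity)).mpr (by linarith)
  have hθr : (1 - θ) * ρ ≤ r := by
    rw [hθ, one_sub_div (by positivity), add_sub_cancel_left, div_mul_eq_mul_div,
      div_le_iff₀ (by positivity)]
    nlinarith
  clear_value θ
  have hθt : θ * t ≤ t := mul_le_of_le_one_left ht hθ1
  have hw : x₀ + (θ * t) • u ∈ {x ∈ S | f x ≤ a + r} := by
    rw [hθ, mul_smul]
    refine (hf.convex_le (a + r)).add_smul_mem_of_closedBall_subset hρ hr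
      (hball.trans fun x hx => ⟨hx.1, by linarith [hx.2]⟩) ⟨hy, hya⟩ ?_
    rw [← smul_sub, norm_smul, Real.norm_of_nonneg ht]
    nlinarith [norm_nonneg (u - v)]
  have hshrink : t - θ * t ≤ r / ρ := by
    rw [le_div_iff₀ hρ]
    nlinarith
  rcases le_or_gt (θ * t) s with hsθ | hsθ
  · have : 0 ≤ 2 / Δ * r := by positivity
    calc t - s ≤ t - θ * t := by linarith
      _ ≤ (1 / ρ + 2 / Δ) * r := by rw [add_mul, one_div_mul_eq_div]; linarith
  · have hgap := hf.sub_mul_le_of_ray hx₀ hw.1 hs hsθ.le hx₀a hx hw.2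
    have : θ * t - s ≤ 2 / Δ * r := by
      have : θ * t + s ≤ 2 := by linarith
      rw [div_mul_eq_mul_div, le_div_iff₀ hΔ]
      nlinarith
    calc t - s = (t - θ * t) + (θ * t - s) := by ring
      _ ≤ r / ρ + 2 / Δ * r := add_le_add hshrink this
      _ = (1 / ρ + 2 / Δ) * r := by ring

theorem ConvexOn.norm_sub_le_of_directions (hf : ConvexOn ℝ S f) (hx₀ : x₀ ∈ S)
    (hx₀a : f x₀ + Δ ≤ a) (hΔ : 0 < Δ) (hρ : 0 < ρ) (hr : 0 < r)
    (hball : closedBall x₀ ρ ⊆ {x ∈ S | f x ≤ a}) {x y : E} (hx : x ∈ S) (hy : y ∈ S)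
    (hxa : |f x - a| ≤ r) (hya : |f y - a| ≤ r) (hx1 : ‖x - x₀‖ ≤ 1) (hy1 : ‖y - x₀‖ ≤ 1)
    (hdir : ‖‖x - x₀‖⁻¹ • (x - x₀) - ‖y - x₀‖⁻¹ • (y - x₀)‖ ≤ r) :
    ‖x - y‖ ≤ (1 / ρ + 2 / Δ + 1) * r := by
  set s := ‖x - x₀‖
  set t := ‖y - x₀‖
  set u := s⁻¹ • (x - x₀)
  set v := t⁻¹ • (y - x₀)
  have polar : ∀ z : E, x₀ + ‖z - x₀‖ • ‖z - x₀‖⁻¹ • (z - x₀) = z := fun z => by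
    rcases eq_or_ne (‖z - x₀‖) 0 with h | h
    · rw [norm_eq_zero, sub_eq_zero] at h; simp [h]
    · rw [smul_inv_smul₀ h, add_sub_cancel]
  have hu : ‖u‖ ≤ 1 := by
    rw [norm_smul, norm_inv, norm_norm]
    exact inv_mul_le_one
  have hxy := hf.radial_gap hx₀ hx₀a hΔ hρ hr hball (norm_nonneg _) (norm_nonneg _) hy1 hdir
    (by rw [polar x]; linarith [(abs_le.mp hxa).1]) (by rw [polar y]; exact hy)
    (by rw [polar y]; linarith [(abs_le.mp hya).2])
  have hyx := hf.radial_gap hx₀ hx₀a hΔ hρ hr hball (norm_nonneg _) (norm_nonneg _) hx1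
    (by rwa [norm_sub_rev]) (by rw [polar y]; linarith [(abs_le.mp hya).1])
    (by rw [polar x]; exact hx) (by rw [polar x]; linarith [(abs_le.mp hxa).2])
  calc ‖x - y‖ = ‖(s - t) • u + t • (u - v)‖ := by
        rw [← polar x, ← polar y]; congr 1; module
    _ ≤ |s - t| * 1 + t * r := by
        refine (norm_add_le _ _).trans (add_le_add ?_ ?_) <;> rw [norm_smul]
        · exact mul_le_mul (le_of_eq (Real.norm_eq_abs _)) hu (norm_nonneg _) (abs_nonneg _)
        · rw [norm_norm]; exact mul_le_mul_of_nonneg_left hdir (norm_nonneg _)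
    _ ≤ (1 / ρ + 2 / Δ + 1) * r := by
        have := abs_sub_le_iff.mpr ⟨hyx, hxy⟩
        have : t * r ≤ r := mul_le_of_le_one_left hr.le hy1
        linarith

end Convex

-- Cells are indexed modulo `B` to keep the code space finite; for points at distance `≤ K r`
-- no two distinct cells collide once `B = ⌈K⌉₊ + 2`.
def gridCode {ι : Type*} (r : ℝ) (B : ℕ) (x : ι → ℝ) : ι → ZMod B :=
  fun i => ((⌊x i / r⌋ : ℤ) : ZMod B)

theorem abs_sub_lt_of_floor_div_cast_eq {r K x y : ℝ} (hr : 0 < r) (hxy : |x - y| ≤ K * r)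
    (h : ((⌊x / r⌋ : ℤ) : ZMod (⌈K⌉₊ + 2)) = ⌊y / r⌋) : |x - y| < r := by
  have hdiv : |x / r - y / r| ≤ K := by
    rwa [← sub_div, abs_div, abs_of_pos hr, div_le_iff₀ hr]
  have hfloor : |(⌊x / r⌋ - ⌊y / r⌋ : ℤ)| < ((⌈K⌉₊ + 2 : ℕ) : ℤ) := by
    have h1 := Int.floor_le (x / r)
    have h2 := Int.lt_floor_add_one (x / r)
    have h3 := Int.floor_le (y / r)
    have h4 := Int.lt_floor_add_one (y / r)
    have hK := Nat.le_ceil K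
    have := abs_le.mp hdiv
    rw [← Int.cast_lt (R := ℝ), Int.cast_abs]
    push_cast
    rw [abs_lt]
    constructor <;> linarith
  have heq : ⌊x / r⌋ = ⌊y / r⌋ := by
    rw [ZMod.intCast_eq_intCast_iff_dvd_sub] at h
    have := Int.eq_zero_of_abs_lt_dvd h (by rwa [abs_sub_comm])
    omega
  have := Int.abs_sub_lt_one_of_floor_eq_floor heq
  rwa [← sub_div, abs_div, abs_of_pos hr, div_lt_one hr] at this

theorem norm_sub_lt_of_gridCode_eq {ι : Type*} [Fintype ι] {r K : ℝ} (hr : 0 < r)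
    {x y : ι → ℝ} (hxy : ‖x - y‖ ≤ K * r)
    (h : gridCode r (⌈K⌉₊ + 2) x = gridCode r (⌈K⌉₊ + 2) y) : ‖x - y‖ < r := by
  refine (pi_norm_lt_iff hr).mpr fun i => ?_
  rw [Pi.sub_apply, Real.norm_eq_abs]
  refine abs_sub_lt_of_floor_div_cast_eq hr ?_ (congrFun h i)
  simpa using (norm_le_pi_norm (x - y) i).trans hxy

theorem packingNumber_le_of_fibres {d : ℕ} {β : Type*} [Fintype β] {E : Set (Fin d → ℝ)}
    {r K : ℝ} (hr : 0 < r) (ψ : (Fin d → ℝ) → β)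
    (hψ : ∀ x ∈ E, ∀ y ∈ E, ψ x = ψ y → dist x y ≤ K * r) :
    packingNumber E r ≤ Fintype.card β * (⌈K⌉₊ + 2) ^ d := by
  refine csSup_le' ?_
  rintro k ⟨x, hxE, hsep⟩
  let code : Fin k → β × (Fin d → ZMod (⌈K⌉₊ + 2)) := fun i =>
    (ψ (x i), gridCode r (⌈K⌉₊ + 2) (x i))
  have hcode : Function.Injective code := fun i j hij => by
    by_contra hne
    obtain ⟨hψij, hgrid⟩ := Prod.ext_iff.mp hij
    have := norm_sub_lt_of_gridCode_eq hr (hψ _ (hxE i) _ (hxE j) hψij) hgrid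
    exact (hsep i j hne).not_gt (by rwa [dist_eq_norm])
  simpa using Fintype.card_le_of_injective code hcode

theorem exists_sphere_code (n : ℕ) {r : ℝ} (hr : 0 < r) :
    ∃ ψ : (Fin (n + 1) → ℝ) → Fin (n + 1) × Bool × (Fin n → ZMod (⌈2 / r⌉₊ + 2)),
      ∀ u v, ‖u‖ = 1 → ‖v‖ = 1 → ψ u = ψ v → ‖u - v‖ < r := by
  -- `u` lies on the face `{u j = ±1}` of the sphere, `j` maximising `|u j|`; the `n` remaining
  -- coordinates are located in a grid of mesh `r`.
  choose j hj using fun u : Fin (n + 1) → ℝ => Finite.exists_max fun i => |u i|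
  have hface : ∀ u : Fin (n + 1) → ℝ, ‖u‖ = 1 → |u (j u)| = 1 := fun u hu => by
    refine le_antisymm ?_ ?_
    · simpa [hu] using norm_le_pi_norm u (j u)
    · rw [← hu]
      exact (pi_norm_le_iff_of_nonneg (abs_nonneg _)).mpr (by simpa using hj u)
  refine ⟨fun u => (j u, decide (0 ≤ u (j u)), gridCode r _ (u ∘ (j u).succAbove)), ?_⟩
  intro u v hu hv huv
  simp only [Prod.mk.injEq, decide_eq_decide] at huv
  obtain ⟨hjuv, hsign, hgrid⟩ := huv
  have hv' := hface v hv
  rw [← hjuv] at hsign hv' hgrid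
  have hface_eq : u (j u) = v (j u) := by
    rcases (abs_eq zero_le_one).mp (hface u hu) with h | h <;>
      rcases (abs_eq zero_le_one).mp hv' with h' | h' <;>
      rw [h, h'] at hsign ⊢ <;> norm_num at hsign
  have hrest : ‖u ∘ (j u).succAbove - v ∘ (j u).succAbove‖ < r := by
    refine norm_sub_lt_of_gridCode_eq hr ?_ hgrid
    rw [div_mul_cancel₀ _ hr.ne', pi_norm_le_iff_of_nonneg zero_le_two]
    intro k
    calc ‖u ((j u).succAbove k) - v ((j u).succAbove k)‖
        ≤ ‖u ((j u).succAbove k)‖ + ‖v ((j u).succAbove k)‖ := norm_sub_le _ _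
      _ ≤ ‖u‖ + ‖v‖ := add_le_add (norm_le_pi_norm u _) (norm_le_pi_norm v _)
      _ = 2 := by rw [hu, hv]; norm_num
  refine (pi_norm_lt_iff hr).mpr fun i => ?_
  rcases eq_or_ne i (j u) with rfl | hi
  · simpa [hface_eq] using hr
  · obtain ⟨k, rfl⟩ := Fin.exists_succAbove_eq hi
    exact (norm_le_pi_norm _ k).trans_lt hrest

theorem natCeil_div_add_two_le {K r : ℝ} (hK : 0 ≤ K) (hr : 0 < r) (hr1 : r ≤ 1) :
    (⌈K / r⌉₊ : ℝ) + 2 ≤ (K + 3) / r := by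
  have hceil := Nat.ceil_lt_add_one (div_nonneg hK hr.le)
  have h1 : 1 ≤ 1 / r := by rw [le_div_iff₀ hr]; linarith
  have : (K + 3) / r = K / r + 3 * (1 / r) := by ring
  linarith

theorem norm_sub_le_one_of_mem_unitCube {d : ℕ} {x y : Fin d → ℝ} (hx : x ∈ unitCube d)
    (hy : y ∈ unitCube d) : ‖x - y‖ ≤ 1 :=
  (pi_norm_le_iff_of_nonneg zero_le_one).mpr fun i =>
    Real.dist_le_of_mem_Icc_01 ⟨hx.1 i, hx.2 i⟩ ⟨hy.1 i, hy.2 i⟩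

theorem packingNumber_le_of_subset_unitCube {d : ℕ} {E : Set (Fin d → ℝ)} {r : ℝ}
    (hE : E ⊆ unitCube d) (hr : 0 < r) (hr1 : r ≤ 1) : (packingNumber E r : ℝ) ≤ (4 / r) ^ d := by
  have hcount := packingNumber_le_of_fibres (K := 1 / r) hr (fun _ => ()) fun x hx y hy _ => by
    rw [one_div_mul_cancel hr.ne', dist_eq_norm]
    exact norm_sub_le_one_of_mem_unitCube (hE hx) (hE hy)
  calc (packingNumber E r : ℝ) ≤ ((⌈1 / r⌉₊ : ℝ) + 2) ^ d := by
        exact_mod_cast hcount.trans_eq (by simp)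
    _ ≤ (4 / r) ^ d := by
        gcongr
        exact (natCeil_div_add_two_le zero_le_one hr hr1).trans_eq (by norm_num)

theorem packingNumber_shell_le {n : ℕ} {f : (Fin (n + 1) → ℝ) → ℝ} {x₀ : Fin (n + 1) → ℝ}
    {a Δ ρ r : ℝ} (hf : ConvexOn ℝ (unitCube (n + 1)) f) (hx₀ : x₀ ∈ unitCube (n + 1))
    (hx₀a : f x₀ + Δ ≤ a) (hρ : 0 < ρ)
    (hball : closedBall x₀ ρ ⊆ {x ∈ unitCube (n + 1) | f x ≤ a}) (hr : 0 < r) (hr1 : r ≤ 1)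
    (hrΔ : r < Δ) :
    (packingNumber {x ∈ unitCube (n + 1) | |f x - a| ≤ r} r : ℝ) ≤
      (n + 1) * (2 * 5 ^ n) * (⌈1 / ρ + 2 / Δ + 1⌉₊ + 2) ^ (n + 1) * (1 / r) ^ n := by
  obtain ⟨ψ, hψ⟩ := exists_sphere_code n hr
  have hunit : ∀ x ∈ {x ∈ unitCube (n + 1) | |f x - a| ≤ r}, ‖‖x - x₀‖⁻¹ • (x - x₀)‖ = 1 :=
    fun x hx => norm_smul_inv_norm <| sub_ne_zero.mpr fun h => by
      have := (abs_le.mp hx.2).1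
      rw [h] at this
      linarith
  have hcount := packingNumber_le_of_fibres (K := 1 / ρ + 2 / Δ + 1) hr
    (fun x => ψ (‖x - x₀‖⁻¹ • (x - x₀))) fun x hx y hy hxy => by
      rw [dist_eq_norm]
      exact hf.norm_sub_le_of_directions hx₀ hx₀a (hr.trans hrΔ) hρ hr hball hx.1 hy.1 hx.2
        hy.2 (norm_sub_le_one_of_mem_unitCube hx.1 hx₀) (norm_sub_le_one_of_mem_unitCube hy.1 hx₀)
        (hψ _ _ (hunit x hx) (hunit y hy) hxy).le
  calc (packingNumber {x ∈ unitCube (n + 1) | |f x - a| ≤ r} r : ℝ)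
      ≤ (n + 1) * (2 * ((⌈2 / r⌉₊ : ℝ) + 2) ^ n) * (⌈1 / ρ + 2 / Δ + 1⌉₊ + 2) ^ (n + 1) := by
        exact_mod_cast hcount.trans_eq (by simp)
    _ ≤ (n + 1) * (2 * (5 / r) ^ n) * (⌈1 / ρ + 2 / Δ + 1⌉₊ + 2) ^ (n + 1) := by
        gcongr
        exact (natCeil_div_add_two_le zero_le_two hr hr1).trans_eq (by norm_num)
    _ = _ := by ring

/-- For a convex `(c,γ)`-Hölder function with a `Δ`-proper level set, there
is `C* > 0` such that for every `r ∈ (0,1)`,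
`N({x : |f(x) - a| ≤ r}, r) ≤ C* (1/r)^{d-1}`. -/
theorem stmt13 (d : ℕ) (hd : 1 ≤ d) (a c γ Δ : ℝ) (hc : 0 < c)
    (hγ : γ ∈ Set.Ioc (0 : ℝ) 1) (hΔ : 0 < Δ) (f : (Fin d → ℝ) → ℝ)
    (hconv : ConvexOn ℝ (unitCube d) f)
    (hhold : HolderOn d c γ (unitCube d) f)
    (hproper : ProperLevelSet d f a Δ) :
    ∃ Cstar : ℝ, 0 < Cstar ∧ ∀ r ∈ Set.Ioo (0 : ℝ) 1,
      (packingNumber {x ∈ unitCube d | |f x - a| ≤ r} r : ℝ) ≤ Cstar * (1 / r) ^ (d - 1) := by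
  obtain ⟨-, ⟨x₀, hx₀, hx₀a⟩, hfr⟩ := hproper
  obtain ⟨ρ, hρ, hball⟩ :=
    exists_closedBall_subset_sublevel isClosed_Icc hhold hc hγ.1 hΔ hx₀ hx₀a hfr
  obtain ⟨n, rfl⟩ : ∃ n, d = n + 1 := ⟨d - 1, by omega⟩
  refine ⟨(n + 1) * (2 * 5 ^ n) * (⌈1 / ρ + 2 / Δ + 1⌉₊ + 2) ^ (n + 1) + (4 / Δ) ^ (n + 1),
    by positivity, fun r ⟨hr, hr1⟩ => ?_⟩
  rw [Nat.add_sub_cancel, add_mul]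
  rcases lt_or_ge r Δ with hrΔ | hΔr
  · exact (packingNumber_shell_le hconv hx₀ hx₀a hρ hball hr hr1.le hrΔ).trans
      (le_add_of_nonneg_right (by positivity))
  · calc (packingNumber {x ∈ unitCube (n + 1) | |f x - a| ≤ r} r : ℝ)
        ≤ (4 / r) ^ (n + 1) := packingNumber_le_of_subset_unitCube (fun x hx => hx.1) hr hr1.le
      _ ≤ (4 / Δ) ^ (n + 1) := by gcongr
      _ ≤ (4 / Δ) ^ (n + 1) * (1 / r) ^ n :=
        le_mul_of_one_le_right (by positivity) (one_le_pow₀ (by rw [le_div_iff₀ hr]; linarith))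
      _ ≤ _ := le_add_of_nonneg_left (by positivity)
end
end

section
/- Let d ≥ 1, a ∈ ℝ, c > 0, γ ∈ (0,1], Δ > 0, and let f : [0,1]^d → ℝ be a convex (c,γ)-Hölder function whose level set {f = a} is Δ-proper. Let x* be a minimizer of f (necessarily x* ∈ (0,1)^d). For each unit vector z in the Euclidean unit sphere S^{d−1} ⊆ ℝ^d, let p_z be the unique point of ∂[0,1]^d with (p_z − x*)/‖p_z − x*‖₂ = z; then there is a unique t_z ∈ [0, ‖x* − p_z‖₂] with f(x* + t_z·z) = a, and the function s : S^{d−1} → ℝ, s(z) := t_z, satisfies |s(z₁) − s(z₂)| ≤ max(6√d/π, (c/Δ)^{1/γ}·d)·θ(z₁,z₂) for all z₁, z₂ ∈ S^{d−1}, where θ(z₁,z₂) := arccos(⟨z₁,z₂⟩) is the geodesic distance on S^{d−1}. -/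
noncomputable section

/-- The Euclidean norm on `Fin d → ℝ`. -/
noncomputable def eNorm {d : ℕ} (x : Fin d → ℝ) : ℝ := Real.sqrt (∑ j, x j ^ 2)

/-- The Euclidean inner product on `Fin d → ℝ`. -/
def eInner {d : ℕ} (x y : Fin d → ℝ) : ℝ := ∑ j, x j * y j

/-!
The minimizer `xs` lies at sup-distance at least `r = (Δ/c)^(1/γ)` from every point of the cube
where `f ≥ a`, by the Hölder bound and the gap `f xs + Δ ≤ a`; hence the closed sup-ball of
radius `r` about `xs` lies in the cube, `f ≤ a` on it, and `xs` is interior. Each ray from `xs`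
leaves the convex cube through exactly one boundary point, and since `f` is convex with
`f xs < a ≤ f` on the boundary, it crosses the level `a` exactly once, at distance `s z ≤ √d`.
For two directions with `‖z₁ - z₂‖ ≤ θ`, the point `xs + (s₁ r / (s₁ θ + r)) • z₂` is a convex
combination of the level point `xs + s₁ • z₁` and a point of the ball, so `f ≤ a` there and
`s₂ ≥ s₁ r / (s₁ θ + r)`, i.e. `s₁ - s₂ ≤ s₁² θ / r ≤ d θ / r`. Finally the Euclidean chord
`‖z₁ - z₂‖₂` is at most the arc `arccos ⟨z₁, z₂⟩`.
-/

open Set Metric Real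

theorem IsPreconnected.inter_frontier_nonempty {X : Type*} [TopologicalSpace X] {s K : Set X}
    (hs : IsPreconnected s) (hin : (s ∩ K).Nonempty) (hout : ¬s ⊆ K) :
    (s ∩ frontier K).Nonempty := by
  by_contra hempty
  have hint : ∀ y ∈ s, y ∈ closure K → y ∈ interior K := fun y hy hyK => by
    by_contra h
    exact hempty ⟨y, hy, hyK, h⟩
  obtain ⟨y, hys, hyK⟩ := hin
  refine hout ((hs.subset_of_closure_inter_subset isOpen_interior
    ⟨y, hys, hint y hys (subset_closure hyK)⟩ ?_).trans interior_subset)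
  exact fun z ⟨hz, hzs⟩ => hint z hzs (closure_mono interior_subset hz)

section NormedSpace

variable {E : Type*} [NormedAddCommGroup E] [NormedSpace ℝ E] {K : Set E} {f : E → ℝ}
  {x v : E} {a r s t : ℝ}

theorem closedBall_subset_of_le_norm_sub (hK : IsClosed K) (hx : x ∈ K) (hr : 0 < r)
    (hfar : ∀ y ∈ frontier K, r ≤ ‖y - x‖) : closedBall x r ⊆ K := by
  have hball : ball x r ⊆ K := by
    by_contra hout
    obtain ⟨y, hy, hyK⟩ := (convex_ball x r).isPreconnected.inter_frontier_nonempty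
      ⟨x, mem_ball_self hr, hx⟩ hout
    exact (mem_ball_iff_norm.1 hy).not_ge (hfar y hyK)
  rw [← closure_ball x hr.ne']
  exact closure_minimal hball hK

theorem exists_add_smul_mem_frontier (hK : Bornology.IsBounded K) (hx : x ∈ K) (hv : v ≠ 0) :
    ∃ t : ℝ, 0 ≤ t ∧ x + t • v ∈ frontier K := by
  obtain ⟨R, hR⟩ := hK.subset_closedBall x
  have hv' : 0 < ‖v‖ := norm_pos_iff.2 hv
  have hout : x + ((|R| + 1) / ‖v‖) • v ∉ K := fun h => by
    have := mem_closedBall_iff_norm.1 (hR h)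
    rw [add_sub_cancel_left, norm_smul, norm_div, norm_norm, div_mul_cancel₀ _ hv'.ne',
      Real.norm_of_nonneg (by positivity)] at this
    linarith [le_abs_self R]
  obtain ⟨_, ⟨t, ht, rfl⟩, hfr⟩ := (isPreconnected_Ici.image (fun t : ℝ => x + t • v)
    (by fun_prop)).inter_frontier_nonempty ⟨x, ⟨0, self_mem_Ici, by simp⟩, hx⟩
    fun h => hout (h ⟨_, mem_Ici.2 (by positivity), rfl⟩)
  exact ⟨t, ht, hfr⟩

theorem add_smul_eq_combo (x v : E) (ht : t ≠ 0) :
    x + s • v = (1 - s / t) • x + (s / t) • (x + t • v) := by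
  rw [smul_add, smul_smul, div_mul_cancel₀ s ht]
  module

theorem Convex.add_smul_mem_interior_of_lt (hK : Convex ℝ K) (hx : x ∈ interior K)
    (hy : x + t • v ∈ closure K) (hs : 0 ≤ s) (hst : s < t) : x + s • v ∈ interior K := by
  have ht : 0 < t := hs.trans_lt hst
  rw [add_smul_eq_combo x v ht.ne']
  exact hK.combo_interior_closure_mem_interior hx hy (by rwa [sub_pos, div_lt_one ht])
    (div_nonneg hs ht.le) (sub_add_cancel _ _)

theorem Convex.eq_of_add_smul_mem_frontier (hK : Convex ℝ K) (hx : x ∈ interior K)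
    (hs : 0 ≤ s) (ht : 0 ≤ t) (hsK : x + s • v ∈ frontier K) (htK : x + t • v ∈ frontier K) :
    s = t := by
  have key : ∀ {s t : ℝ}, 0 ≤ s → s < t → x + t • v ∈ frontier K → x + s • v ∉ frontier K :=
    fun hs hst ht hsK => hsK.2 (hK.add_smul_mem_interior_of_lt hx ht.1 hs hst)
  rcases lt_trichotomy s t with hst | rfl | hts
  exacts [(key hs hst htK hsK).elim, rfl, (key ht hts hsK htK).elim]

theorem Convex.add_smul_mem_of_mem_Icc (hK : Convex ℝ K) (hx : x ∈ K) (hy : x + t • v ∈ K)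
    (hs : s ∈ Icc 0 t) : x + s • v ∈ K := by
  rcases hs.1.eq_or_lt with rfl | hs0
  · simpa using hx
  have ht : 0 < t := hs0.trans_le hs.2
  rw [add_smul_eq_combo x v ht.ne']
  exact hK hx hy (sub_nonneg.2 (div_le_one_of_le₀ hs.2 ht.le)) (div_nonneg hs.1 ht.le)
    (sub_add_cancel _ _)

theorem ConvexOn.apply_add_smul_lt (hf : ConvexOn ℝ K f) (hx : x ∈ K) (hy : x + t • v ∈ K)
    (hfx : f x < a) (hfy : f (x + t • v) ≤ a) (hs : 0 ≤ s) (hst : s < t) :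
    f (x + s • v) < a := by
  have ht : 0 < t := hs.trans_lt hst
  have hμ : s / t < 1 := (div_lt_one ht).2 hst
  calc f (x + s • v) ≤ (1 - s / t) • f x + (s / t) • f (x + t • v) := by
        rw [add_smul_eq_combo x v ht.ne']
        exact hf.2 hx hy (by linarith) (div_nonneg hs ht.le) (sub_add_cancel _ _)
    _ < a := by
        simp only [smul_eq_mul]
        nlinarith [mul_le_mul_of_nonneg_left hfy (div_nonneg hs ht.le)]

theorem ConvexOn.eq_of_apply_add_smul_eq (hf : ConvexOn ℝ K f) (hx : x ∈ K) (hfx : f x < a)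
    (hs : 0 ≤ s) (ht : 0 ≤ t) (hsK : x + s • v ∈ K) (htK : x + t • v ∈ K)
    (hfs : f (x + s • v) = a) (hft : f (x + t • v) = a) : s = t := by
  rcases lt_trichotomy s t with hst | rfl | hts
  · exact ((hf.apply_add_smul_lt hx htK hfx hft.le hs hst).ne hfs).elim
  · rfl
  · exact ((hf.apply_add_smul_lt hx hsK hfx hfs.le ht hts).ne hft).elim

theorem ContinuousOn.exists_apply_add_smul_eq (hK : Convex ℝ K) (hf : ContinuousOn f K)
    (hx : x ∈ K) (hy : x + t • v ∈ K) (ht : 0 ≤ t) (hfx : f x ≤ a) (hfy : a ≤ f (x + t • v)) :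
    ∃ s ∈ Icc 0 t, f (x + s • v) = a :=
  intermediate_value_Icc ht (hf.comp (by fun_prop) fun _ hs => hK.add_smul_mem_of_mem_Icc hx hy hs)
    (by simpa using ⟨hfx, hfy⟩)

theorem ConvexOn.sub_le_sq_mul_div {z₁ z₂ : E} {s₁ s₂ θ : ℝ} (hf : ConvexOn ℝ K f) (hr : 0 < r)
    (hball : closedBall x r ⊆ {y ∈ K | f y ≤ a}) (hfx : f x < a)
    (hs₁ : 0 ≤ s₁) (h₁K : x + s₁ • z₁ ∈ K) (h₁ : f (x + s₁ • z₁) = a)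
    (hs₂ : 0 ≤ s₂) (h₂ : f (x + s₂ • z₂) = a) (hθ : 0 ≤ θ) (hz : ‖z₁ - z₂‖ ≤ θ) :
    s₁ - s₂ ≤ s₁ ^ 2 * θ / r := by
  have hxK : x ∈ K := (hball (mem_closedBall_self hr.le)).1
  rcases hθ.eq_or_lt with rfl | hθ
  · obtain rfl : z₁ = z₂ := sub_eq_zero.1 (norm_le_zero_iff.1 hz)
    rw [mul_zero, zero_div, sub_nonpos]
    exact not_lt.1 fun hlt => (hf.apply_add_smul_lt hxK h₁K hfx h₁.le hs₂ hlt).ne h₂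
  set D := s₁ * θ + r
  have hD : 0 < D := by positivity
  set w := x + (r / θ) • (z₂ - z₁)
  have hw : w ∈ closedBall x r := by
    rw [mem_closedBall_iff_norm, add_sub_cancel_left, norm_smul,
      Real.norm_of_nonneg (by positivity), norm_sub_rev]
    calc r / θ * ‖z₁ - z₂‖ ≤ r / θ * θ := by gcongr
      _ = r := div_mul_cancel₀ r hθ.ne'
  have hsum : r / D + s₁ * θ / D = 1 := by field_simp; ring
  have hcoef : s₁ * θ / D * (r / θ) = s₁ * r / D := by field_simp
  have hcombo : x + (s₁ * r / D) • z₂ = (r / D) • (x + s₁ • z₁) + (s₁ * θ / D) • w := by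
    simp only [w, smul_add, smul_sub, smul_smul, hcoef]
    linear_combination (norm := module) -hsum • x
  have hy : x + (s₁ * r / D) • z₂ ∈ {y ∈ K | f y ≤ a} := by
    rw [hcombo]
    exact hf.convex_le a ⟨h₁K, h₁.le⟩ (hball hw) (by positivity) (by positivity) hsum
  have hle : s₁ * r / D ≤ s₂ := not_lt.1 fun hlt =>
    (hf.apply_add_smul_lt hxK hy.1 hfx hy.2 hs₂ hlt).ne h₂
  calc s₁ - s₂ ≤ s₁ - s₁ * r / D := by linarith
    _ = s₁ ^ 2 * θ / D := by field_simp; ring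
    _ ≤ s₁ ^ 2 * θ / r := by gcongr; linarith [mul_nonneg hs₁ hθ.le]

end NormedSpace

theorem norm_sub_le_arccos_inner {F : Type*} [NormedAddCommGroup F] [InnerProductSpace ℝ F]
    {u v : F} (hu : ‖u‖ = 1) (hv : ‖v‖ = 1) : ‖u - v‖ ≤ arccos (inner ℝ u v) := by
  have hinner : |inner ℝ u v| ≤ 1 := by simpa [hu, hv] using abs_real_inner_le_norm u v
  have hcos : cos (arccos (inner ℝ u v)) = inner ℝ u v :=
    cos_arccos (neg_le_of_abs_le hinner) (le_of_abs_le hinner)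
  have hchord : ‖u - v‖ ^ 2 = 2 - 2 * cos (arccos (inner ℝ u v)) := by
    rw [hcos, norm_sub_sq_real, hu, hv]; ring
  refine (pow_le_pow_iff_left₀ (norm_nonneg _) (arccos_nonneg _) two_ne_zero).1 ?_
  linarith [one_sub_sq_div_two_le_cos (x := arccos (inner ℝ u v))]

section Euclidean

variable {d : ℕ}

theorem eNorm_eq_norm_toLp (x : Fin d → ℝ) : eNorm x = ‖WithLp.toLp 2 x‖ := by
  simp [eNorm, EuclideanSpace.norm_eq]

theorem eInner_eq_inner_toLp (x y : Fin d → ℝ) :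
    eInner x y = inner ℝ (WithLp.toLp 2 x) (WithLp.toLp 2 y) := by
  simp [eInner, PiLp.inner_apply, mul_comm]

theorem norm_le_eNorm (x : Fin d → ℝ) : ‖x‖ ≤ eNorm x := by
  rw [eNorm_eq_norm_toLp]
  exact (pi_norm_le_iff_of_nonneg (norm_nonneg _)).2 fun j =>
    PiLp.norm_apply_le (WithLp.toLp 2 x) j

theorem eNorm_smul (t : ℝ) (x : Fin d → ℝ) : eNorm (t • x) = |t| * eNorm x := by
  simp [eNorm_eq_norm_toLp, norm_smul]

theorem eNorm_sub_comm (x y : Fin d → ℝ) : eNorm (x - y) = eNorm (y - x) := by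
  simp only [eNorm_eq_norm_toLp, WithLp.toLp_sub, norm_sub_rev]

theorem eNorm_sub_le_arccos {z₁ z₂ : Fin d → ℝ} (h₁ : eNorm z₁ = 1) (h₂ : eNorm z₂ = 1) :
    eNorm (z₁ - z₂) ≤ arccos (eInner z₁ z₂) := by
  rw [eNorm_eq_norm_toLp] at h₁ h₂ ⊢
  rw [eInner_eq_inner_toLp, WithLp.toLp_sub]
  exact norm_sub_le_arccos_inner h₁ h₂

theorem eNorm_sub_le_sqrt {x y : Fin d → ℝ} (hx : x ∈ unitCube d) (hy : y ∈ unitCube d) :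
    eNorm (x - y) ≤ √d := by
  refine sqrt_le_sqrt ((Finset.sum_le_sum fun j _ => ?_).trans_eq
    (by simp : ∑ _j : Fin d, (1 : ℝ) = d))
  have := hx.1 j; have := hx.2 j; have := hy.1 j; have := hy.2 j
  simp only [Pi.sub_apply, Pi.zero_apply, Pi.one_apply] at *
  nlinarith

theorem sq_le_of_add_smul_mem_unitCube {x z : Fin d → ℝ} {s : ℝ} (hx : x ∈ unitCube d)
    (hy : x + s • z ∈ unitCube d) (hz : eNorm z = 1) (hs : 0 ≤ s) : s ^ 2 ≤ d := by
  have h := eNorm_sub_le_sqrt hy hx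
  rw [add_sub_cancel_left, eNorm_smul, hz, mul_one, abs_of_nonneg hs] at h
  simpa [sq_sqrt (Nat.cast_nonneg d)] using pow_le_pow_left₀ hs h 2

end Euclidean

section Holder

variable {d : ℕ} {a c γ Δ : ℝ} {E : Set (Fin d → ℝ)} {f : (Fin d → ℝ) → ℝ} {x y : Fin d → ℝ}

theorem HolderOn.continuousOn (hf : HolderOn d c γ E f) (hγ : 0 < γ) : ContinuousOn f E := by
  intro x hx
  have hbound : Continuous fun y : Fin d → ℝ => c * ‖y - x‖ ^ γ :=
    continuous_const.mul ((continuous_id.sub continuous_const).norm.rpow_const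
      fun _ => Or.inr hγ.le)
  have hlim : Filter.Tendsto (fun y => c * ‖y - x‖ ^ γ) (nhdsWithin x E) (nhds 0) := by
    simpa [zero_rpow hγ.ne'] using (hbound.tendsto x).mono_left nhdsWithin_le_nhds
  rw [ContinuousWithinAt, tendsto_iff_dist_tendsto_zero]
  exact squeeze_zero' (Filter.Eventually.of_forall fun _ => dist_nonneg)
    (eventually_mem_nhdsWithin.mono fun y hy => (Real.dist_eq _ _).trans_le (hf y hy x hx)) hlim

theorem HolderOn.rpow_le_norm_sub (hf : HolderOn d c γ E f) (hc : 0 < c) (hγ : 0 < γ)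
    (hΔ : 0 ≤ Δ) (hx : x ∈ E) (hy : y ∈ E) (h : f x + Δ ≤ f y) :
    (Δ / c) ^ (1 / γ) ≤ ‖y - x‖ := by
  rw [one_div, rpow_inv_le_iff_of_pos (div_nonneg hΔ hc.le) (norm_nonneg _) hγ, div_le_iff₀' hc]
  linarith [le_of_abs_le (hf y hy x hx)]

theorem HolderOn.le_add_of_norm_sub_le (hf : HolderOn d c γ E f) (hc : 0 < c) (hγ : 0 < γ)
    (hΔ : 0 ≤ Δ) (hx : x ∈ E) (hy : y ∈ E) (h : ‖y - x‖ ≤ (Δ / c) ^ (1 / γ)) :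
    f y ≤ f x + Δ := by
  rw [one_div, le_rpow_inv_iff_of_pos (norm_nonneg _) (div_nonneg hΔ hc.le) hγ,
    le_div_iff₀' hc] at h
  linarith [le_of_abs_le (hf y hy x hx)]

theorem HolderOn.closedBall_subset_sublevel (hf : HolderOn d c γ E f) (hE : IsClosed E)
    (hc : 0 < c) (hγ : 0 < γ) (hΔ : 0 < Δ) (hx : x ∈ E) (hgap : f x + Δ ≤ a)
    (hfr : ∀ y ∈ frontier E, a ≤ f y) : closedBall x ((Δ / c) ^ (1 / γ)) ⊆ {y ∈ E | f y ≤ a} := by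
  have hball : closedBall x ((Δ / c) ^ (1 / γ)) ⊆ E :=
    closedBall_subset_of_le_norm_sub hE hx (by positivity) fun y hy =>
      hf.rpow_le_norm_sub hc hγ hΔ.le hx (hE.frontier_subset hy) (hgap.trans (hfr y hy))
  exact fun y hy => ⟨hball hy, (hf.le_add_of_norm_sub_le hc hγ hΔ.le hx (hball hy)
    (mem_closedBall_iff_norm.1 hy)).trans hgap⟩

end Holder

theorem exists_frontier_point_and_level_on_ray {d : ℕ} {f : (Fin d → ℝ) → ℝ} {a : ℝ}
    {xs z : Fin d → ℝ} (hf : ConvexOn ℝ (unitCube d) f) (hfc : ContinuousOn f (unitCube d))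
    (hxs : xs ∈ interior (unitCube d)) (hfxs : f xs < a)
    (hfr : ∀ y ∈ frontier (unitCube d), a ≤ f y) (hz : eNorm z = 1) :
    ∃ p : Fin d → ℝ, ∃ s : ℝ,
      ((p ∈ frontier (unitCube d) ∧ p - xs = eNorm (p - xs) • z) ∧
        (∀ q ∈ frontier (unitCube d), q - xs = eNorm (q - xs) • z → q = p) ∧
        (s ∈ Icc 0 (eNorm (xs - p)) ∧ f (xs + s • z) = a) ∧
        (∀ t ∈ Icc 0 (eNorm (xs - p)), f (xs + t • z) = a → t = s)) ∧
      xs + s • z ∈ unitCube d := by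
  have hK : Convex ℝ (unitCube d) := convex_Icc 0 1
  have hxsK : xs ∈ unitCube d := interior_subset hxs
  have hz0 : z ≠ 0 := by rintro rfl; simp [eNorm] at hz
  have hnorm : ∀ t, 0 ≤ t → eNorm (t • z) = t := fun t ht => by
    rw [eNorm_smul, hz, mul_one, abs_of_nonneg ht]
  obtain ⟨T, hT, hTfr⟩ := exists_add_smul_mem_frontier (isBounded_Icc 0 1) hxsK hz0
  have hTK : xs + T • z ∈ unitCube d := isClosed_Icc.frontier_subset hTfr
  have hdist : eNorm (xs - (xs + T • z)) = T := by
    rw [eNorm_sub_comm, add_sub_cancel_left, hnorm T hT]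
  obtain ⟨s, hs, hfs⟩ := hfc.exists_apply_add_smul_eq hK hxsK hTK hT hfxs.le (hfr _ hTfr)
  have hsK := hK.add_smul_mem_of_mem_Icc hxsK hTK hs
  refine ⟨xs + T • z, s, ⟨⟨hTfr, by rw [add_sub_cancel_left, hnorm T hT]⟩, fun q hq hqz => ?_,
    ⟨by rwa [hdist], hfs⟩, fun t ht hft => ?_⟩, hsK⟩
  · have hq' : q = xs + eNorm (q - xs) • z := eq_add_of_sub_eq' hqz
    rw [hq', hK.eq_of_add_smul_mem_frontier (s := eNorm (q - xs)) hxs (sqrt_nonneg _) hT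
      (by rwa [← hq']) hTfr]
  · rw [hdist] at ht
    exact hf.eq_of_apply_add_smul_eq hxsK hfxs ht.1 hs.1
      (hK.add_smul_mem_of_mem_Icc hxsK hTK ht) hsK hft hfs

theorem stmt19_general (d : ℕ) (a c γ Δ : ℝ) (hc : 0 < c)
    (hγ : γ ∈ Set.Ioc (0 : ℝ) 1) (hΔ : 0 < Δ) (f : (Fin d → ℝ) → ℝ)
    (hconv : ConvexOn ℝ (unitCube d) f)
    (hhold : HolderOn d c γ (unitCube d) f)
    (hproper : ProperLevelSet d f a Δ)
    (xs : Fin d → ℝ) (hxs : xs ∈ unitCube d) (hmin : ∀ x ∈ unitCube d, f xs ≤ f x) :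
    xs ∈ interior (unitCube d) ∧
    ∃ p : (Fin d → ℝ) → (Fin d → ℝ), ∃ s : (Fin d → ℝ) → ℝ,
      (∀ z : Fin d → ℝ, eNorm z = 1 →
        (p z ∈ frontier (unitCube d) ∧ p z - xs = eNorm (p z - xs) • z) ∧
        (∀ q ∈ frontier (unitCube d), q - xs = eNorm (q - xs) • z → q = p z) ∧
        (s z ∈ Set.Icc 0 (eNorm (xs - p z)) ∧ f (xs + s z • z) = a) ∧
        (∀ t ∈ Set.Icc 0 (eNorm (xs - p z)), f (xs + t • z) = a → t = s z)) ∧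
      ∀ z₁ z₂ : Fin d → ℝ, eNorm z₁ = 1 → eNorm z₂ = 1 →
        |s z₁ - s z₂| ≤ max (6 * Real.sqrt d / Real.pi) ((c / Δ) ^ (1 / γ) * d) *
          Real.arccos (eInner z₁ z₂) := by
  obtain ⟨-, ⟨x₀, hx₀, hfx₀⟩, hfr⟩ := hproper
  have hgap : f xs + Δ ≤ a := by linarith [hmin x₀ hx₀]
  set r := (Δ / c) ^ (1 / γ)
  have hr : 0 < r := by positivity
  have hball := hhold.closedBall_subset_sublevel isClosed_Icc hc hγ.1 hΔ hxs hgap hfr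
  have hint : xs ∈ interior (unitCube d) :=
    interior_mono (hball.trans (sep_subset _ _))
      (mem_interior_iff_mem_nhds.2 (closedBall_mem_nhds xs hr))
  choose! p s hps hsK using fun z (hz : eNorm z = 1) =>
    exists_frontier_point_and_level_on_ray hconv (hhold.continuousOn hγ.1) hint
      (by linarith) hfr hz
  refine ⟨hint, p, s, hps, fun z₁ z₂ h₁ h₂ => ?_⟩
  set θ := arccos (eInner z₁ z₂)
  have hθ0 : 0 ≤ θ := arccos_nonneg _
  have hbound : ∀ u v, eNorm u = 1 → eNorm v = 1 → ‖u - v‖ ≤ θ → s u - s v ≤ d / r * θ :=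
    fun u v hu hv huv => calc
      s u - s v ≤ s u ^ 2 * θ / r := hconv.sub_le_sq_mul_div hr hball (by linarith)
        (hps u hu).2.2.1.1.1 (hsK u hu) (hps u hu).2.2.1.2 (hps v hv).2.2.1.1.1
        (hps v hv).2.2.1.2 hθ0 huv
      _ ≤ d * θ / r := by
        gcongr; exact sq_le_of_add_smul_mem_unitCube hxs (hsK u hu) hu (hps u hu).2.2.1.1.1
      _ = d / r * θ := by ring
  have hM : d / r ≤ (c / Δ) ^ (1 / γ) * d := by
    rw [← inv_div Δ c, inv_rpow (by positivity), div_eq_inv_mul]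
  have hθ : ‖z₁ - z₂‖ ≤ θ := (norm_le_eNorm _).trans (eNorm_sub_le_arccos h₁ h₂)
  calc |s z₁ - s z₂| ≤ d / r * θ :=
        abs_sub_le_iff.2 ⟨hbound z₁ z₂ h₁ h₂ hθ, hbound z₂ z₁ h₂ h₁ (norm_sub_rev z₂ z₁ ▸ hθ)⟩
    _ ≤ _ := mul_le_mul_of_nonneg_right (hM.trans (le_max_right _ _)) hθ0

/-- For a convex `(c,γ)`-Hölder `f` with a `Δ`-proper level set and
minimizer `x*` (necessarily interior), for every Euclidean-unit direction `z` there is a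
unique boundary point `p_z` in direction `z` from `x*`, a unique `t_z ∈ [0, ‖x* - p_z‖₂]`
with `f(x* + t_z z) = a`, and `z ↦ t_z` is Lipschitz with constant
`max(6√d/π, (c/Δ)^{1/γ} d)` w.r.t. the geodesic distance `θ(z₁,z₂) = arccos⟨z₁,z₂⟩`. -/
theorem stmt19 (d : ℕ) (hd : 1 ≤ d) (a c γ Δ : ℝ) (hc : 0 < c)
    (hγ : γ ∈ Set.Ioc (0 : ℝ) 1) (hΔ : 0 < Δ) (f : (Fin d → ℝ) → ℝ)
    (hconv : ConvexOn ℝ (unitCube d) f)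
    (hhold : HolderOn d c γ (unitCube d) f)
    (hproper : ProperLevelSet d f a Δ)
    (xs : Fin d → ℝ) (hxs : xs ∈ unitCube d) (hmin : ∀ x ∈ unitCube d, f xs ≤ f x) :
    xs ∈ interior (unitCube d) ∧
    ∃ p : (Fin d → ℝ) → (Fin d → ℝ), ∃ s : (Fin d → ℝ) → ℝ,
      (∀ z : Fin d → ℝ, eNorm z = 1 →
        (p z ∈ frontier (unitCube d) ∧ p z - xs = eNorm (p z - xs) • z) ∧
        (∀ q ∈ frontier (unitCube d), q - xs = eNorm (q - xs) • z → q = p z) ∧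
        (s z ∈ Set.Icc 0 (eNorm (xs - p z)) ∧ f (xs + s z • z) = a) ∧
        (∀ t ∈ Set.Icc 0 (eNorm (xs - p z)), f (xs + t • z) = a → t = s z)) ∧
      ∀ z₁ z₂ : Fin d → ℝ, eNorm z₁ = 1 → eNorm z₂ = 1 →
        |s z₁ - s z₂| ≤ max (6 * Real.sqrt d / Real.pi) ((c / Δ) ^ (1 / γ) * d) *
          Real.arccos (eInner z₁ z₂) :=
  stmt19_general d a c γ Δ hc hγ hΔ f hconv hhold hproper xs hxs hmin
end
end
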